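/- arXiv:1305.0343 — 5 statements merged into one kernel-verified Lean document; each statement's English description precedes it below -/
import Mathlib

section
/- Every map σ : {1,…,k+l} → ℕ* whose image is {1,…,m} for some m (a packed word of length k+l) can be written uniquely as ε ∘ (σ₁ ⊗ σ₂), where σ₁ is a packed word of length k, σ₂ is a packed word of length l, and ε is a (p,q)-surjective shuffle with p = max(σ₁) and q = max(σ₂). -/
/-- A packed word of length `n`: a map `σ : {1,…,n} → ℕ*` whose image is
`{1,…,m}` for some `m` (every value is ≥ 1 and every positive value below a
value of `σ` is attained). -/
def IsPacked {n : ℕ} (σ : Fin n → ℕ) : Prop :=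
  (∀ i, 1 ≤ σ i) ∧ ∀ (i : Fin n) (j : ℕ), 1 ≤ j → j ≤ σ i → ∃ i', σ i' = j

/-- The maximum `max(σ)` of a word. -/
def maxW {n : ℕ} (σ : Fin n → ℕ) : ℕ := Finset.univ.sup σ

/-- The word `σ₁ ⊗ σ₂` on `{1,…,k+l}`, acting as `σ₁` on `{1,…,k}` and as
`i ↦ σ₂(i-k) + max(σ₁)` on `{k+1,…,k+l}`. -/
def wTensor {k l : ℕ} (σ₁ : Fin k → ℕ) (σ₂ : Fin l → ℕ) : Fin (k + l) → ℕ := fun i =>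
  if h : (i : ℕ) < k then σ₁ ⟨i, h⟩
  else σ₂ ⟨(i : ℕ) - k, by have := i.isLt; omega⟩ + maxW σ₁

/-- A `(p,q)`-surjective shuffle: a packed word `ε` of length `p+q` such that
`ε(1)<…<ε(p)` and `ε(p+1)<…<ε(p+q)`. -/
def IsSurjShuffle (p q : ℕ) (ε : Fin (p + q) → ℕ) : Prop :=
  IsPacked ε ∧
  (∀ i j : Fin (p + q), (i : ℕ) < (j : ℕ) → (j : ℕ) < p → ε i < ε j) ∧
  (∀ i j : Fin (p + q), p ≤ (i : ℕ) → (i : ℕ) < (j : ℕ) → ε i < ε j)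

/-- Composition `ε ∘ σ` of words: the letter `σ(i)` (an element of `{1,…,m}`)
is replaced by `ε(σ(i))`. -/
def wComp {m n : ℕ} (ε : Fin m → ℕ) (σ : Fin n → ℕ) : Fin n → ℕ := fun i =>
  if h : σ i - 1 < m then ε ⟨σ i - 1, h⟩ else 0

noncomputable def pack {n : ℕ} (τ : Fin n → ℕ) : Fin n → ℕ := fun i =>
  (((Finset.image τ Finset.univ).orderIsoOfFin rfl).symm
    ⟨τ i, Finset.mem_image_of_mem τ (Finset.mem_univ i)⟩ : Fin _) + 1

lemma one_le_pack {n : ℕ} (τ : Fin n → ℕ) (i : Fin n) : 1 ≤ pack τ i :=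
  Nat.le_add_left 1 _

lemma pack_sub_lt {n : ℕ} (τ : Fin n → ℕ) (i : Fin n) :
    pack τ i - 1 < (Finset.image τ Finset.univ).card := by
  show ((((Finset.image τ Finset.univ).orderIsoOfFin rfl).symm
    ⟨τ i, Finset.mem_image_of_mem τ (Finset.mem_univ i)⟩ : Fin _) : ℕ) + 1 - 1 < _
  simpa using Fin.is_lt _

lemma pack_emb {n : ℕ} (τ : Fin n → ℕ) (i : Fin n)
    (h : pack τ i - 1 < (Finset.image τ Finset.univ).card) :
    (Finset.image τ Finset.univ).orderEmbOfFin rfl ⟨pack τ i - 1, h⟩ = τ i := by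
  have h2 : (⟨pack τ i - 1, h⟩ : Fin (Finset.image τ Finset.univ).card)
      = ((Finset.image τ Finset.univ).orderIsoOfFin rfl).symm
        ⟨τ i, Finset.mem_image_of_mem τ (Finset.mem_univ i)⟩ := by
    ext; simp [pack]
  rw [h2, ← Finset.coe_orderIsoOfFin_apply, OrderIso.apply_symm_apply]

lemma pack_surj {n : ℕ} (τ : Fin n → ℕ) (j : ℕ)
    (hj : j < (Finset.image τ Finset.univ).card) :
    ∃ i, pack τ i = j + 1 := by
  have hm := Finset.orderEmbOfFin_mem (Finset.image τ Finset.univ) rfl ⟨j, hj⟩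
  rw [Finset.mem_image] at hm
  obtain ⟨i, -, hi⟩ := hm
  refine ⟨i, ?_⟩
  have : (((Finset.image τ Finset.univ).orderIsoOfFin rfl).symm
      ⟨τ i, Finset.mem_image_of_mem τ (Finset.mem_univ i)⟩ : Fin _) = ⟨j, hj⟩ := by
    apply (Finset.orderIsoOfFin _ rfl).injective
    rw [OrderIso.apply_symm_apply]
    exact Subtype.ext (by rw [Finset.coe_orderIsoOfFin_apply]; exact hi)
  simp [pack, this]

lemma pack_packed {n : ℕ} (τ : Fin n → ℕ) : IsPacked (pack τ) := by
  refine ⟨one_le_pack τ, fun i j h1 h2 => ?_⟩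
  have hlt : j - 1 < (Finset.image τ Finset.univ).card := by
    have := pack_sub_lt τ i; omega
  obtain ⟨i', hi'⟩ := pack_surj τ (j - 1) hlt
  exact ⟨i', by omega⟩

lemma maxW_pack {n : ℕ} (τ : Fin n → ℕ) :
    maxW (pack τ) = (Finset.image τ Finset.univ).card := by
  apply le_antisymm
  · apply Finset.sup_le
    intro i _
    have := pack_sub_lt τ i
    have := one_le_pack τ i
    omega
  · rcases Nat.eq_zero_or_pos (Finset.image τ Finset.univ).card with h | h
    · omega
    · obtain ⟨i, hi⟩ := pack_surj τ ((Finset.image τ Finset.univ).card - 1) (by omega)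
      have : pack τ i ≤ maxW (pack τ) := Finset.le_sup (Finset.mem_univ i)
      omega

lemma packed_surj {n : ℕ} {τ : Fin n → ℕ} (h : IsPacked τ) {v : ℕ}
    (h1 : 1 ≤ v) (h2 : v ≤ maxW τ) : ∃ i, τ i = v := by
  rcases Nat.eq_zero_or_pos n with rfl | hn
  · simp [maxW] at h2; omega
  · obtain ⟨b, -, hb⟩ := Finset.exists_mem_eq_sup Finset.univ ⟨⟨0, hn⟩, Finset.mem_univ _⟩ τ
    exact h.2 b v h1 (le_trans h2 (le_of_eq hb))

lemma wTensor_castAdd {k l : ℕ} (σ₁ : Fin k → ℕ) (σ₂ : Fin l → ℕ) (i : Fin k) :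
    wTensor σ₁ σ₂ (Fin.castAdd l i) = σ₁ i := by
  simp [wTensor, i.isLt]

lemma wTensor_natAdd {k l : ℕ} (σ₁ : Fin k → ℕ) (σ₂ : Fin l → ℕ) (i : Fin l) :
    wTensor σ₁ σ₂ (Fin.natAdd k i) = σ₂ i + maxW σ₁ := by
  simp [wTensor]

noncomputable def shuffleOf (A B : Finset ℕ) {m : ℕ} : Fin m → ℕ := fun j =>
  if h : (j : ℕ) < A.card then A.orderEmbOfFin rfl ⟨j, h⟩
  else if h2 : (j : ℕ) - A.card < B.card then B.orderEmbOfFin rfl ⟨(j : ℕ) - A.card, h2⟩ else 0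

/-- Every packed word `σ` of length `k+l` can be written uniquely as
`ε ∘ (σ₁ ⊗ σ₂)`, where `σ₁` is a packed word of length `k`, `σ₂` is a packed
word of length `l`, and `ε` is a `(p,q)`-surjective shuffle with `p = max(σ₁)`
and `q = max(σ₂)`. -/
theorem exists_unique_packed_decomposition (k l : ℕ) (σ : Fin (k + l) → ℕ)
    (hσ : IsPacked σ) :
    ∃! t : (σ₁ : Fin k → ℕ) × (σ₂ : Fin l → ℕ) × (Fin (maxW σ₁ + maxW σ₂) → ℕ),
      IsPacked t.1 ∧ IsPacked t.2.1 ∧ IsSurjShuffle (maxW t.1) (maxW t.2.1) t.2.2 ∧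
      σ = wComp t.2.2 (wTensor t.1 t.2.1) := by
  set τ₁ : Fin k → ℕ := fun i => σ (Fin.castAdd l i) with hτ₁def
  set τ₂ : Fin l → ℕ := fun i => σ (Fin.natAdd k i) with hτ₂def
  have hA : maxW (pack τ₁) = (Finset.image τ₁ Finset.univ).card := maxW_pack τ₁
  have hB : maxW (pack τ₂) = (Finset.image τ₂ Finset.univ).card := maxW_pack τ₂
  have hsplit : ∀ i : Fin (k + l),
      σ i ∈ Finset.image τ₁ Finset.univ ∨ σ i ∈ Finset.image τ₂ Finset.univ := by
    intro i
    by_cases h : (i : ℕ) < k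
    · left
      have : σ i = τ₁ ⟨(i : ℕ), h⟩ := by
        show σ i = σ (Fin.castAdd l ⟨(i : ℕ), h⟩)
        exact congrArg σ (Fin.ext rfl)
      rw [this]
      exact Finset.mem_image_of_mem τ₁ (Finset.mem_univ _)
    · right
      have : σ i = τ₂ ⟨(i : ℕ) - k, by have := i.isLt; omega⟩ := by
        show σ i = σ (Fin.natAdd k ⟨(i : ℕ) - k, _⟩)
        exact congrArg σ (Fin.ext (by simp [Fin.natAdd]; omega))
      rw [this]
      exact Finset.mem_image_of_mem τ₂ (Finset.mem_univ _)
  have hsub : ∀ a, (a ∈ Finset.image τ₁ Finset.univ ∨ a ∈ Finset.image τ₂ Finset.univ) →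
      ∃ i, σ i = a := by
    rintro a (ha | ha) <;> rw [Finset.mem_image] at ha <;> obtain ⟨i, -, hi⟩ := ha
    · exact ⟨Fin.castAdd l i, hi⟩
    · exact ⟨Fin.natAdd k i, hi⟩
  refine ⟨⟨pack τ₁, pack τ₂,
      shuffleOf (Finset.image τ₁ Finset.univ) (Finset.image τ₂ Finset.univ)⟩,
      ⟨pack_packed τ₁, pack_packed τ₂, ?_, ?_⟩, ?_⟩
  · -- IsSurjShuffle
    show IsSurjShuffle (maxW (pack τ₁)) (maxW (pack τ₂))
      (shuffleOf (Finset.image τ₁ Finset.univ) (Finset.image τ₂ Finset.univ))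
    have hval : ∀ j : Fin (maxW (pack τ₁) + maxW (pack τ₂)),
        ∃ i0, σ i0 = shuffleOf (Finset.image τ₁ Finset.univ) (Finset.image τ₂ Finset.univ) j := by
      intro j
      have hj := j.isLt
      simp only [shuffleOf]
      split_ifs with h1 h2
      · exact hsub _ (Or.inl (Finset.orderEmbOfFin_mem _ rfl _))
      · exact hsub _ (Or.inr (Finset.orderEmbOfFin_mem _ rfl _))
      · omega
    have hsurjAB : ∀ v, (v ∈ Finset.image τ₁ Finset.univ ∨ v ∈ Finset.image τ₂ Finset.univ) →
        ∃ j' : Fin (maxW (pack τ₁) + maxW (pack τ₂)),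
          shuffleOf (Finset.image τ₁ Finset.univ) (Finset.image τ₂ Finset.univ) j' = v := by
      rintro v (hv | hv)
      · have : v ∈ Set.range ((Finset.image τ₁ Finset.univ).orderEmbOfFin rfl) := by
          rw [Finset.range_orderEmbOfFin]; exact hv
        obtain ⟨idx, hidx⟩ := this
        refine ⟨⟨(idx : ℕ), by have := idx.isLt; omega⟩, ?_⟩
        simp only [shuffleOf]
        rw [dif_pos idx.isLt]
        exact hidx
      · have : v ∈ Set.range ((Finset.image τ₂ Finset.univ).orderEmbOfFin rfl) := by
          rw [Finset.range_orderEmbOfFin]; exact hv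
        obtain ⟨idx, hidx⟩ := this
        refine ⟨⟨(Finset.image τ₁ Finset.univ).card + (idx : ℕ),
          by have := idx.isLt; omega⟩, ?_⟩
        simp only [shuffleOf]
        rw [dif_neg (by omega), dif_pos (by have := idx.isLt; omega)]
        rw [← hidx]
        exact congrArg _ (Fin.ext (by simp))
    refine ⟨⟨?_, ?_⟩, ?_, ?_⟩
    · intro j
      obtain ⟨i0, hi0⟩ := hval j
      rw [← hi0]
      exact hσ.1 i0
    · intro j v hv1 hv2
      obtain ⟨i0, hi0⟩ := hval j
      rw [← hi0] at hv2
      obtain ⟨i', hi'⟩ := hσ.2 i0 v hv1 hv2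
      exact hsurjAB v (hi' ▸ hsplit i')
    · intro i j hij hj
      simp only [shuffleOf]
      rw [dif_pos (by omega), dif_pos (by omega)]
      exact (Finset.orderEmbOfFin _ rfl).strictMono (by exact hij)
    · intro i j hpi hij
      have hi2 := i.isLt
      have hj2 := j.isLt
      simp only [shuffleOf]
      rw [dif_neg (show ¬ (i : ℕ) < (Finset.image τ₁ Finset.univ).card by omega),
        dif_pos (show (i : ℕ) - (Finset.image τ₁ Finset.univ).card <
          (Finset.image τ₂ Finset.univ).card by omega),
        dif_neg (show ¬ (j : ℕ) < (Finset.image τ₁ Finset.univ).card by omega),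
        dif_pos (show (j : ℕ) - (Finset.image τ₁ Finset.univ).card <
          (Finset.image τ₂ Finset.univ).card by omega)]
      exact (Finset.orderEmbOfFin _ rfl).strictMono (by show (i:ℕ) - _ < (j:ℕ) - _; omega)
  · -- σ = wComp ...
    show σ = wComp (shuffleOf (Finset.image τ₁ Finset.univ) (Finset.image τ₂ Finset.univ))
      (wTensor (pack τ₁) (pack τ₂))
    funext i
    by_cases h : (i : ℕ) < k
    · obtain ⟨i', rfl⟩ : ∃ i' : Fin k, i = Fin.castAdd l i' := ⟨⟨(i:ℕ), h⟩, Fin.ext rfl⟩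
      simp only [wComp, wTensor_castAdd]
      rw [dif_pos (by have := pack_sub_lt τ₁ i'; omega)]
      simp only [shuffleOf]
      rw [dif_pos (pack_sub_lt τ₁ i')]
      exact (pack_emb τ₁ i' _).symm
    · obtain ⟨i', rfl⟩ : ∃ i' : Fin l, i = Fin.natAdd k i' :=
        ⟨⟨(i:ℕ) - k, by have := i.isLt; omega⟩, Fin.ext (by simp [Fin.natAdd]; omega)⟩
      simp only [wComp, wTensor_natAdd]
      have hge := one_le_pack τ₂ i'
      have hlt := pack_sub_lt τ₂ i'
      rw [dif_pos (by omega)]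
      simp only [shuffleOf]
      rw [dif_neg (by omega), dif_pos (by omega)]
      have : (⟨pack τ₂ i' + maxW (pack τ₁) - 1 - (Finset.image τ₁ Finset.univ).card, by omega⟩ :
          Fin (Finset.image τ₂ Finset.univ).card) = ⟨pack τ₂ i' - 1, hlt⟩ :=
        Fin.ext (by simp; omega)
      rw [this]
      exact (pack_emb τ₂ i' _).symm
  · -- uniqueness
    rintro ⟨σ₁', σ₂', ε'⟩ ⟨hp1, hp2, ⟨hshp, hm1, hm2⟩, hco⟩
    dsimp only at ε' hp1 hp2 hshp hm1 hm2 hco ⊢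
    have hge1 : ∀ i, 1 ≤ σ₁' i := hp1.1
    have hge2 : ∀ i, 1 ≤ σ₂' i := hp2.1
    have hle1 : ∀ i : Fin k, σ₁' i ≤ maxW σ₁' := fun i => Finset.le_sup (Finset.mem_univ i)
    have hle2 : ∀ i : Fin l, σ₂' i ≤ maxW σ₂' := fun i => Finset.le_sup (Finset.mem_univ i)
    have hlt1 : ∀ i : Fin k, σ₁' i - 1 < maxW σ₁' := fun i => by
      have := hle1 i; have := hge1 i; omega
    have hlt2 : ∀ i : Fin l, σ₂' i - 1 < maxW σ₂' := fun i => by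
      have := hle2 i; have := hge2 i; omega
    have haux1 : ∀ i : Fin k, τ₁ i = ε' ⟨σ₁' i - 1, by have := hlt1 i; omega⟩ := by
      intro i
      have h0 := congrFun hco (Fin.castAdd l i)
      simp only [wComp, wTensor_castAdd] at h0
      rw [dif_pos (by have := hlt1 i; omega)] at h0
      exact h0
    have haux2 : ∀ i : Fin l, τ₂ i = ε' ⟨maxW σ₁' + (σ₂' i - 1), by have := hlt2 i; omega⟩ := by
      intro i
      have h0 := congrFun hco (Fin.natAdd k i)
      simp only [wComp, wTensor_natAdd] at h0
      rw [dif_pos (by have := hlt2 i; have := hge2 i; omega)] at h0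
      exact h0.trans (congrArg ε' (Fin.ext (by simp; have := hge2 i; omega)))
    have hAeq : Finset.image τ₁ Finset.univ = Finset.image
        (fun j : Fin (maxW σ₁') => ε' ⟨(j : ℕ), by have := j.isLt; omega⟩) Finset.univ := by
      ext a
      simp only [Finset.mem_image]
      constructor
      · rintro ⟨i, -, rfl⟩
        exact ⟨⟨σ₁' i - 1, hlt1 i⟩, Finset.mem_univ _, (haux1 i).symm⟩
      · rintro ⟨j, -, rfl⟩
        obtain ⟨i, hi⟩ := packed_surj hp1 (v := (j : ℕ) + 1) (by omega) (by have := j.isLt; omega)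
        refine ⟨i, Finset.mem_univ _, ?_⟩
        rw [haux1 i]
        exact congrArg ε' (Fin.ext (by simp; omega))
    have hBeq : Finset.image τ₂ Finset.univ = Finset.image
        (fun j : Fin (maxW σ₂') => ε' ⟨maxW σ₁' + (j : ℕ), by have := j.isLt; omega⟩)
        Finset.univ := by
      ext a
      simp only [Finset.mem_image]
      constructor
      · rintro ⟨i, -, rfl⟩
        exact ⟨⟨σ₂' i - 1, hlt2 i⟩, Finset.mem_univ _, (haux2 i).symm⟩
      · rintro ⟨j, -, rfl⟩
        obtain ⟨i, hi⟩ := packed_surj hp2 (v := (j : ℕ) + 1) (by omega) (by have := j.isLt; omega)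
        refine ⟨i, Finset.mem_univ _, ?_⟩
        rw [haux2 i]
        exact congrArg ε' (Fin.ext (by simp; omega))
    have hmono1 : StrictMono (fun j : Fin (maxW σ₁') =>
        ε' ⟨(j : ℕ), by have := j.isLt; omega⟩) := by
      intro a b hab
      exact hm1 ⟨(a : ℕ), by have := a.isLt; omega⟩ ⟨(b : ℕ), by have := b.isLt; omega⟩
        hab b.isLt
    have hmono2 : StrictMono (fun j : Fin (maxW σ₂') =>
        ε' ⟨maxW σ₁' + (j : ℕ), by have := j.isLt; omega⟩) := by
      intro a b hab
      refine hm2 ⟨maxW σ₁' + (a : ℕ), by have := a.isLt; omega⟩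
        ⟨maxW σ₁' + (b : ℕ), by have := b.isLt; omega⟩ (Nat.le_add_right _ _) ?_
      have : (a : ℕ) < (b : ℕ) := hab
      simpa using this
    have hpA : maxW σ₁' = (Finset.image τ₁ Finset.univ).card := by
      rw [hAeq, Finset.card_image_of_injective _ hmono1.injective, Finset.card_univ,
        Fintype.card_fin]
    have hqB : maxW σ₂' = (Finset.image τ₂ Finset.univ).card := by
      rw [hBeq, Finset.card_image_of_injective _ hmono2.injective, Finset.card_univ,
        Fintype.card_fin]
    have hmemA : ∀ x : Fin (Finset.image τ₁ Finset.univ).card,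
        ε' ⟨(x : ℕ), by have := x.isLt; omega⟩ ∈ Finset.image τ₁ Finset.univ := by
      intro x
      exact (Finset.ext_iff.mp hAeq _).mpr (Finset.mem_image_of_mem _
        (Finset.mem_univ (⟨(x : ℕ), by have := x.isLt; omega⟩ : Fin (maxW σ₁'))))
    have hmemB : ∀ x : Fin (Finset.image τ₂ Finset.univ).card,
        ε' ⟨maxW σ₁' + (x : ℕ), by have := x.isLt; omega⟩ ∈ Finset.image τ₂ Finset.univ := by
      intro x
      exact (Finset.ext_iff.mp hBeq _).mpr (Finset.mem_image_of_mem _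
        (Finset.mem_univ (⟨(x : ℕ), by have := x.isLt; omega⟩ : Fin (maxW σ₂'))))
    have hu1 := Finset.orderEmbOfFin_unique (s := Finset.image τ₁ Finset.univ) rfl
      (f := fun x : Fin (Finset.image τ₁ Finset.univ).card =>
        ε' ⟨(x : ℕ), by have := x.isLt; omega⟩) hmemA
      (by intro a b hab
          exact hm1 ⟨(a : ℕ), by have := a.isLt; omega⟩ ⟨(b : ℕ), by have := b.isLt; omega⟩
            hab (show (b : ℕ) < maxW σ₁' by have := b.isLt; omega))
    have hu2 := Finset.orderEmbOfFin_unique (s := Finset.image τ₂ Finset.univ) rfl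
      (f := fun x : Fin (Finset.image τ₂ Finset.univ).card =>
        ε' ⟨maxW σ₁' + (x : ℕ), by have := x.isLt; omega⟩) hmemB
      (by intro a b hab
          refine hm2 ⟨maxW σ₁' + (a : ℕ), by have := a.isLt; omega⟩
            ⟨maxW σ₁' + (b : ℕ), by have := b.isLt; omega⟩ (Nat.le_add_right _ _) ?_
          have : (a : ℕ) < (b : ℕ) := hab
          simpa using this)
    have key1 : ∀ (j : ℕ) (h1 : j < (Finset.image τ₁ Finset.univ).card)
        (h2 : j < maxW σ₁' + maxW σ₂'), ε' ⟨j, h2⟩ =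
          (Finset.image τ₁ Finset.univ).orderEmbOfFin rfl ⟨j, h1⟩ := by
      intro j h1 h2
      exact congrFun hu1 ⟨j, h1⟩
    have key2 : ∀ (j : ℕ) (h1 : j < (Finset.image τ₂ Finset.univ).card)
        (h2 : maxW σ₁' + j < maxW σ₁' + maxW σ₂'), ε' ⟨maxW σ₁' + j, h2⟩ =
          (Finset.image τ₂ Finset.univ).orderEmbOfFin rfl ⟨j, h1⟩ := by
      intro j h1 h2
      exact congrFun hu2 ⟨j, h1⟩
    have e1 : σ₁' = pack τ₁ := by
      funext i
      have h1 := haux1 i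
      rw [key1 (σ₁' i - 1) (by have := hlt1 i; omega) (by have := hlt1 i; omega)] at h1
      have h2 := pack_emb τ₁ i (pack_sub_lt τ₁ i)
      have h3 := (Finset.orderEmbOfFin _ rfl).injective (h2.trans h1)
      have h4 : pack τ₁ i - 1 = σ₁' i - 1 := congrArg Fin.val h3
      have := one_le_pack τ₁ i
      have := hge1 i
      omega
    have e2 : σ₂' = pack τ₂ := by
      funext i
      have h1 := haux2 i
      rw [key2 (σ₂' i - 1) (by have := hlt2 i; omega) (by have := hlt2 i; omega)] at h1
      have h2 := pack_emb τ₂ i (pack_sub_lt τ₂ i)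
      have h3 := (Finset.orderEmbOfFin _ rfl).injective (h2.trans h1)
      have h4 : pack τ₂ i - 1 = σ₂' i - 1 := congrArg Fin.val h3
      have := one_le_pack τ₂ i
      have := hge2 i
      omega
    subst e1
    subst e2
    have e3 : ε' = shuffleOf (Finset.image τ₁ Finset.univ) (Finset.image τ₂ Finset.univ) := by
      funext j
      have hj := j.isLt
      simp only [shuffleOf]
      by_cases h1 : (j : ℕ) < (Finset.image τ₁ Finset.univ).card
      · rw [dif_pos h1]
        exact key1 (j : ℕ) h1 j.isLt
      · rw [dif_neg h1, dif_pos (by omega)]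
        have hk := key2 ((j : ℕ) - (Finset.image τ₁ Finset.univ).card) (by omega) (by omega)
        rw [← hk]
        exact congrArg ε' (Fin.ext (by simp; omega))
    rw [e3]
end

section
/- There is a bijection between heap-ordered forests with n vertices and permutations of {1,…,n}, under which the connected components of the forest correspond to the cycles of the permutation; moreover its restriction gives a bijection between heap-ordered forests with no isolated vertices and permutations of {1,…,n} without fixed points. -/
/-- A heap-ordered forest on `{1,…,n}`: a rooted forest with vertex set `Fin n`
(encoded by its parent function) such that labels strictly decrease towards the
roots. -/
def HeapForest (n : ℕ) :=
  {par : Fin n → Option (Fin n) // ∀ v w, par v = some w → w < v}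

/-- `v` is an isolated vertex of the forest: it is a root and has no child. -/
def IsIsolated {n : ℕ} (F : HeapForest n) (v : Fin n) : Prop :=
  F.1 v = none ∧ ∀ w, F.1 w ≠ some v

section ForestAux

variable {n : ℕ}

/-- Push an optional vertex of `Fin n` into `Fin (n+1)`. -/
def upF (o : Option (Fin n)) : Option (Fin (n + 1)) := o.map Fin.castSucc

/-- Pull an optional vertex of `Fin (n+1)` down to `Fin n` (dropping `last`). -/
def downF (o : Option (Fin (n + 1))) : Option (Fin n) :=
  o.bind fun w => if h : (w : ℕ) < n then some ⟨(w : ℕ), h⟩ else none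

@[simp] lemma upF_none : upF (n := n) none = none := rfl

@[simp] lemma upF_some (k : Fin n) : upF (some k) = some k.castSucc := rfl

@[simp] lemma upF_eq_none {o : Option (Fin n)} : upF o = none ↔ o = none := by
  cases o <;> simp [upF]

@[simp] lemma upF_eq_some {o : Option (Fin n)} {k : Fin n} :
    upF o = some k.castSucc ↔ o = some k := by
  cases o <;> simp [upF, Fin.castSucc_inj]

lemma downF_upF (o : Option (Fin n)) : downF (upF o) = o := by
  cases o with
  | none => rfl
  | some k =>
    simp only [upF_some, downF, Option.bind_some]
    rw [dif_pos (by simpa using k.isLt)]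
    simp

lemma upF_downF {o : Option (Fin (n + 1))} (h : ∀ w, o = some w → (w : ℕ) < n) :
    upF (downF o) = o := by
  cases o with
  | none => rfl
  | some w =>
    simp only [downF, Option.bind_some]
    rw [dif_pos (h w rfl)]
    simp only [upF_some, Option.some.injEq]
    exact Fin.ext rfl

/-- Splitting a heap-ordered forest on `n+1` vertices: the parent of the top
vertex, together with the forest on the remaining vertices. -/
def heapSplit (n : ℕ) : HeapForest (n + 1) ≃ Option (Fin n) × HeapForest n where
  toFun F := (downF (F.1 (Fin.last n)),
    ⟨fun v => downF (F.1 v.castSucc), by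
      intro v w hw
      dsimp only at hw
      cases hF : F.1 v.castSucc with
      | none => rw [hF] at hw; exact absurd hw (by simp [downF])
      | some w0 =>
        rw [hF] at hw
        have hlt : w0 < v.castSucc := F.2 _ _ hF
        rw [Fin.lt_def] at hlt
        simp only [Fin.coe_castSucc] at hlt
        have h0 : (w0 : ℕ) < n := lt_of_lt_of_le hlt (Nat.le_of_lt_succ v.castSucc.isLt)
        simp only [downF, Option.bind_some, dif_pos h0, Option.some.injEq] at hw
        rw [Fin.lt_def, ← hw]
        exact hlt⟩)
  invFun p := ⟨fun v => if h : (v : ℕ) < n then upF (p.2.1 ⟨(v : ℕ), h⟩) else upF p.1, by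
      intro v w hw
      dsimp only at hw
      by_cases h : (v : ℕ) < n
      · rw [dif_pos h] at hw
        cases hG : p.2.1 ⟨(v : ℕ), h⟩ with
        | none => rw [hG] at hw; simp at hw
        | some w0 =>
          rw [hG] at hw
          simp only [upF_some, Option.some.injEq] at hw
          have hlt := p.2.2 _ _ hG
          rw [Fin.lt_def] at hlt ⊢
          rw [← hw]
          simpa using hlt
      · rw [dif_neg h] at hw
        cases ho : p.1 with
        | none => rw [ho] at hw; simp at hw
        | some k =>
          rw [ho] at hw
          simp only [upF_some, Option.some.injEq] at hw
          rw [Fin.lt_def, ← hw]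
          simp only [Fin.coe_castSucc]
          omega⟩
  left_inv F := by
    apply Subtype.ext
    funext v
    by_cases h : (v : ℕ) < n
    · simp only [dif_pos h]
      have hv : (⟨(v : ℕ), h⟩ : Fin n).castSucc = v := Fin.ext rfl
      rw [hv]
      exact upF_downF fun w hw => by
        have := F.2 _ _ hw
        rw [Fin.lt_def] at this
        omega
    · have hv : v = Fin.last n := Fin.ext (by have := v.isLt; simp only [Fin.val_last]; omega)
      simp only [dif_neg h]
      rw [hv]
      exact upF_downF fun w hw => by
        have := F.2 _ _ hw
        rw [Fin.lt_def] at this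
        simpa using this
  right_inv p := by
    obtain ⟨o, G⟩ := p
    refine Prod.ext ?_ (Subtype.ext (funext fun v => ?_)) <;> simp only
    · rw [dif_neg (by simp)]
      exact downF_upF o
    · rw [dif_pos (by simpa using v.isLt)]
      have hv : (⟨((v.castSucc : Fin (n + 1)) : ℕ), by simpa using v.isLt⟩ : Fin n) = v :=
        Fin.ext rfl
      rw [hv, downF_upF]

lemma heapSplit_fst (F : HeapForest (n + 1)) :
    F.1 (Fin.last n) = upF (heapSplit n F).1 := by
  refine (upF_downF fun w hw => ?_).symm
  have := F.2 _ _ hw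
  rw [Fin.lt_def] at this
  simpa using this

lemma heapSplit_snd (F : HeapForest (n + 1)) (v : Fin n) :
    F.1 v.castSucc = upF ((heapSplit n F).2.1 v) := by
  refine (upF_downF fun w hw => ?_).symm
  have := F.2 _ _ hw
  rw [Fin.lt_def] at this
  simp only [Fin.coe_castSucc] at this
  exact lt_of_lt_of_le this (Nat.le_of_lt_succ v.castSucc.isLt)

lemma no_parent_last (F : HeapForest (n + 1)) (w : Fin (n + 1)) :
    F.1 w ≠ some (Fin.last n) := by
  intro hw
  have := F.2 _ _ hw
  exact absurd this (not_lt.mpr (Fin.le_last w))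

end ForestAux

section PermAux

open Equiv Equiv.Perm Finset



variable {α : Type*} [DecidableEq α]

lemma isCycle_swap_mul_of_fix [Finite α] {c : Perm α} (hc : c.IsCycle) {x y : α}
    (hx : c x = x) (hy : c y ≠ y) : IsCycle (swap x y * c) := by
  have hxy : x ≠ y := by rintro rfl; exact hy hx
  have hcyx : c y ≠ x := by
    intro h
    exact hxy (c.injective (h.trans hx.symm)).symm
  have key : ∀ j : ℕ, (swap x y * c).SameCycle y ((c ^ j) y) := by
    intro j
    induction j with
    | zero => simpa using SameCycle.refl _ _
    | succ j ih =>
      rw [pow_succ', mul_apply]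
      by_cases hcw : c ((c ^ j) y) = y
      · rw [hcw]
      · have hwx : (c ^ j) y ≠ x := by
          intro h
          have h2 : (c ^ j) x = x := pow_apply_eq_self_of_apply_eq_self hx j
          have h3 : y = x := (c ^ j).injective (h.trans h2.symm)
          exact hy (by rw [h3]; exact hx)
        have hcwx : c ((c ^ j) y) ≠ x := fun h => hwx (c.injective (h.trans hx.symm))
        have hstep : (swap x y * c) ((c ^ j) y) = c ((c ^ j) y) := by
          rw [mul_apply, swap_apply_of_ne_of_ne hcwx hcw]
        exact ih.trans ⟨1, by simpa using hstep⟩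
  refine ⟨y, ?_, fun z hz => ?_⟩
  · rw [mul_apply, swap_apply_of_ne_of_ne hcyx hy]
    exact hy
  · by_cases hcz : c z = z
    · have hz' : swap x y z ≠ z := by rwa [mul_apply, hcz] at hz
      have hzx : z = x := by
        by_contra h
        rcases eq_or_ne z y with rfl | h2
        · exact hy hcz
        · exact hz' (swap_apply_of_ne_of_ne h h2)
      rw [hzx]
      exact (show (swap x y * c).SameCycle x y from ⟨1, by simp [mul_apply, hx]⟩).symm
    · obtain ⟨i, _, hi⟩ := (hc.sameCycle hy hcz).exists_pow_eq'
      exact hi ▸ key i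



lemma card_cycleFactorsFinset_swap_mul {α : Type*} [DecidableEq α] [Fintype α] {σ : Perm α}
    {x y : α} (hx : σ x = x) (hy : σ y ≠ y) :
    (swap x y * σ).cycleFactorsFinset.card = σ.cycleFactorsFinset.card := by
  set τ := swap x y * σ with hτ
  have hxy : x ≠ y := by rintro rfl; exact hy hx
  have hτx : τ x = y := by rw [hτ, mul_apply, hx, swap_apply_left]
  have hσyx : σ y ≠ x := fun h => hxy (σ.injective (h.trans hx.symm)).symm
  have hτy : τ y = σ y := by rw [hτ, mul_apply, swap_apply_of_ne_of_ne hσyx hy]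
  have hσ_eq : σ = swap x y * τ := by rw [hτ, ← mul_assoc, swap_mul_self, one_mul]
  have hcxσ : ∀ c ∈ σ.cycleFactorsFinset, c x = x := by
    intro c hc
    refine notMem_support.mp (fun h => ?_)
    exact (mem_support.mp (mem_cycleFactorsFinset_support_le hc h)) hx
  -- facts about cycles of τ containing x
  have hτfact : ∀ c ∈ τ.cycleFactorsFinset, x ∈ c.support →
      c x = y ∧ y ∈ c.support ∧ c y ≠ x := by
    intro c hc hxc
    have h2 := (mem_cycleFactorsFinset_iff.mp hc).2
    have hcx : c x = y := by rw [h2 x hxc, hτx]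
    have hyc : y ∈ c.support := by rw [← hcx]; exact apply_mem_support.mpr hxc
    refine ⟨hcx, hyc, fun h => ?_⟩
    have hτyx : τ y = x := by rw [← h2 y hyc, h]
    have : σ y = y := by rw [hσ_eq, mul_apply, hτyx, swap_apply_left]
    exact hy this
  symm
  apply Finset.card_bij' (i := fun c _ => if y ∈ c.support then swap x y * c else c)
    (j := fun c _ => if x ∈ c.support then swap x y * c else c)
  · -- maps to τ's factors
    intro c hc
    have hmem := mem_cycleFactorsFinset_iff.mp hc
    have hcx : c x = x := hcxσ c hc
    by_cases hyc : y ∈ c.support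
    · simp only [if_pos hyc]
      rw [mem_cycleFactorsFinset_iff]
      refine ⟨isCycle_swap_mul_of_fix hmem.1 hcx (mem_support.mp hyc), fun a ha => ?_⟩
      rcases eq_or_ne a x with rfl | hax
      · rw [mul_apply, hcx, swap_apply_left, hτx]
      · have hac : a ∈ c.support := by
          by_contra h
          have hca : c a = a := notMem_support.mp h
          have hay : a ≠ y := fun h' => h (h' ▸ hyc)
          rw [mem_support, mul_apply, hca, swap_apply_of_ne_of_ne hax hay] at ha
          exact ha rfl
        rw [mul_apply, hmem.2 a hac, hτ, mul_apply]
    · simp only [if_neg hyc]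
      rw [mem_cycleFactorsFinset_iff]
      refine ⟨hmem.1, fun a ha => ?_⟩
      have h1 : σ a ≠ x := by
        intro h
        have := apply_mem_support.mpr (mem_cycleFactorsFinset_support_le hc ha)
        rw [h] at this
        exact (mem_support.mp this) hx
      have h2 : σ a ≠ y := by
        intro h
        apply hyc
        rw [← h, ← hmem.2 a ha]
        exact apply_mem_support.mpr ha
      rw [hmem.2 a ha, hτ, mul_apply, swap_apply_of_ne_of_ne h1 h2]
  · -- maps back to σ's factors
    intro c hc
    have hmem := mem_cycleFactorsFinset_iff.mp hc
    by_cases hxc : x ∈ c.support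
    · obtain ⟨hcx, hyc, hcy_ne⟩ := hτfact c hc hxc
      have hcyc' : IsCycle (swap x y * c) := by
        have h1 : c x ≠ x := by rw [hcx]; exact hxy.symm
        have h2 : c (c x) ≠ x := by rw [hcx]; exact hcy_ne
        have := hmem.1.swap_mul h1 h2
        rwa [hcx] at this
      simp only [if_pos hxc]
      rw [mem_cycleFactorsFinset_iff]
      refine ⟨hcyc', fun a ha => ?_⟩
      rcases eq_or_ne a x with rfl | hax
      · exfalso; rw [mem_support, mul_apply, hcx, swap_apply_right] at ha; exact ha rfl
      · by_cases hac : a ∈ c.support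
        · rw [mul_apply, hmem.2 a hac, hτ, mul_apply, swap_apply_self]
        · exfalso
          have hca : c a = a := notMem_support.mp hac
          have hay : a ≠ y := fun h => hac (by rw [h]; exact hyc)
          rw [mem_support, mul_apply, hca, swap_apply_of_ne_of_ne hax hay] at ha
          exact ha rfl
    · simp only [if_neg hxc]
      rw [mem_cycleFactorsFinset_iff]
      refine ⟨hmem.1, fun a ha => ?_⟩
      have h1 : τ a ≠ x := by
        intro h
        apply hxc
        rw [← h, ← hmem.2 a ha]
        exact apply_mem_support.mpr ha
      have h2 : τ a ≠ y := by
        intro h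
        exact hxc ((τ.injective (h.trans hτx.symm)) ▸ ha)
      have h1' : σ a ≠ y := fun h => h1 (by rw [hτ, mul_apply, h, swap_apply_right])
      have h2' : σ a ≠ x := fun h => h2 (by rw [hτ, mul_apply, h, swap_apply_left])
      rw [hmem.2 a ha, hτ, mul_apply, swap_apply_of_ne_of_ne h2' h1']
  · -- left inverse
    intro c hc
    have hcx : c x = x := hcxσ c hc
    by_cases hyc : y ∈ c.support
    · have hx' : x ∈ (swap x y * c).support := by
        rw [mem_support, mul_apply, hcx, swap_apply_left]
        exact hxy.symm
      simp only [if_pos hyc, if_pos hx', ← mul_assoc, swap_mul_self, one_mul]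
    · have hxc : x ∉ c.support := fun h => (mem_support.mp h) hcx
      simp only [if_neg hyc, if_neg hxc]
  · -- right inverse
    intro c hc
    have hmem := mem_cycleFactorsFinset_iff.mp hc
    by_cases hxc : x ∈ c.support
    · obtain ⟨hcx, hyc, hcy_ne⟩ := hτfact c hc hxc
      have hyc' : y ∈ (swap x y * c).support := by
        rw [mem_support, mul_apply,
          swap_apply_of_ne_of_ne hcy_ne (mem_support.mp hyc)]
        exact mem_support.mp hyc
      simp only [if_pos hxc, if_pos hyc', ← mul_assoc, swap_mul_self, one_mul]
    · have hyc : y ∉ c.support := by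
        intro h
        have hinv : c⁻¹ y ∈ c.support := by
          rw [← support_inv]
          exact apply_mem_support.mpr (by rwa [support_inv])
        have hτa : τ (c⁻¹ y) = y := by rw [← hmem.2 _ hinv, ← Perm.mul_apply, mul_inv_cancel, Perm.one_apply]
        have : c⁻¹ y = x := τ.injective (hτa.trans hτx.symm)
        exact hxc (this ▸ hinv)
      simp only [if_neg hxc, if_neg hyc]

lemma card_cycleFactorsFinset_eq {α : Type*} [DecidableEq α] [Fintype α] (σ : Perm α) :
    σ.cycleFactorsFinset.card = Multiset.card σ.cycleType := by
  rw [cycleType_def, Multiset.card_map]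
  rfl

lemma cycleType_permCongr' {α β : Type*} [DecidableEq α] [Fintype α] [DecidableEq β] [Fintype β]
    (e : α ≃ β) (g : Perm α) : (e.permCongr g).cycleType = g.cycleType := by
  have hf : (e.permCongr g) =
      g.extendDomain (e.trans (Equiv.subtypeUnivEquiv (fun _ : β => trivial)).symm) := by
    ext b
    rw [Perm.extendDomain_apply_subtype _ _ trivial]
    simp
  rw [hf, cycleType_extendDomain]

lemma cycleType_optionCongr {α : Type*} [DecidableEq α] [Fintype α] (g : Perm α) :
    Equiv.Perm.cycleType g.optionCongr = g.cycleType := by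
  classical
  let f : α ≃ {o : Option α // o.isSome = true} :=
    { toFun := fun a => ⟨some a, rfl⟩
      invFun := fun o => Option.get o.1 o.2
      left_inv := fun a => rfl
      right_inv := fun o => Subtype.ext (Option.some_get o.2) }
  have hf : g.optionCongr = g.extendDomain f := by
    refine Equiv.ext fun o => ?_
    cases o with
    | none => rw [Perm.extendDomain_apply_not_subtype _ _ (by simp)]; rfl
    | some a =>
      show Option.map g (some a) = (g.extendDomain f) ((f a : {o : Option α // o.isSome = true}) : Option α)
      rw [Perm.extendDomain_apply_image]
      rfl
  rw [hf, cycleType_extendDomain]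

end PermAux


/-- There is a bijection `φ` between heap-ordered forests with `n` vertices and
permutations of `{1,…,n}`, under which the connected components of the forest
correspond to the cycles of the permutation (isolated vertices correspond to
fixed points, and the total number of components — i.e. of roots — equals the
total number of cycles, fixed points included); in particular its restriction
gives a bijection between heap-ordered forests without isolated vertices and
permutations without fixed points. -/
theorem heapForest_equiv_perm (n : ℕ) :
    ∃ φ : HeapForest n ≃ Equiv.Perm (Fin n),
      (∀ F : HeapForest n,
        (Finset.univ.filter (fun v => F.1 v = none)).card =
          (φ F).cycleFactorsFinset.card +
            (Finset.univ.filter (fun v => (φ F) v = v)).card) ∧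
      (∀ (F : HeapForest n) (v : Fin n), IsIsolated F v ↔ (φ F) v = v) := by
  induction n with
  | zero =>
    refine ⟨⟨fun _ => 1, fun _ => ⟨fun v => none, fun v w _ => v.elim0⟩,
      fun F => Subtype.ext (funext fun v => v.elim0),
      fun σ => Equiv.ext fun v => v.elim0⟩, fun F => by simp; show 0 = (1 : Equiv.Perm (Fin 0)).cycleFactorsFinset.card; simp, fun F v => v.elim0⟩
  | succ n ih =>
    classical
    obtain ⟨φ', h1, h2⟩ := ih
    let φ : HeapForest (n + 1) ≃ Equiv.Perm (Fin (n + 1)) :=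
      (heapSplit n).trans (((Equiv.refl (Option (Fin n))).prodCongr φ').trans
        (Equiv.Perm.decomposeOption.symm.trans (finSuccEquivLast.symm.permCongr)))
    have hφdef : ∀ F : HeapForest (n + 1),
        φ F = finSuccEquivLast.symm.permCongr
          (Equiv.swap none (heapSplit n F).1 *
            Equiv.optionCongr (φ' (heapSplit n F).2)) := fun F => rfl
    have happ : ∀ (F : HeapForest (n + 1)) (v : Fin (n + 1)),
        φ F v = finSuccEquivLast.symm
          ((Equiv.swap none (heapSplit n F).1)
            (Option.map (φ' (heapSplit n F).2) (finSuccEquivLast v))) := fun F v => rfl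
    have hfixlast : ∀ F : HeapForest (n + 1),
        (φ F (Fin.last n) = Fin.last n) ↔ (heapSplit n F).1 = none := by
      intro F
      rw [happ, finSuccEquivLast_last]
      cases ho : (heapSplit n F).1 with
      | none => simp [Equiv.swap_self]
      | some k =>
        rw [Option.map_none, Equiv.swap_apply_left, finSuccEquivLast_symm_some]
        simp [(Fin.castSucc_lt_last k).ne]
    have hfixiff : ∀ (F : HeapForest (n + 1)) (u : Fin n),
        (φ F u.castSucc = u.castSucc) ↔
          (φ' (heapSplit n F).2 u = u ∧ (heapSplit n F).1 ≠ some u) := by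
      intro F u
      rw [happ, finSuccEquivLast_castSucc, Option.map_some]
      cases ho : (heapSplit n F).1 with
      | none =>
        rw [Equiv.swap_self]
        simp only [Equiv.refl_apply, finSuccEquivLast_symm_some, ne_eq,
          reduceCtorEq, not_false_eq_true, and_true]
        exact Fin.castSucc_inj
      | some k =>
        by_cases hσu : φ' (heapSplit n F).2 u = k
        · rw [hσu, Equiv.swap_apply_right, finSuccEquivLast_symm_none]
          constructor
          · intro h; exact absurd h (Fin.castSucc_lt_last u).ne'
          · rintro ⟨h1', h2'⟩
            exact absurd (congrArg some h1') h2'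
        · rw [Equiv.swap_apply_of_ne_of_ne (by simp) (by simpa using hσu),
            finSuccEquivLast_symm_some, Fin.castSucc_inj]
          constructor
          · intro h
            refine ⟨h, fun hc => ?_⟩
            injection hc with hc
            exact hσu (h.trans hc.symm)
          · rintro ⟨h, -⟩; exact h
    have hiso : ∀ (F : HeapForest (n + 1)) (v : Fin (n + 1)), IsIsolated F v ↔ φ F v = v := by
      intro F v
      induction v using Fin.lastCases with
      | last =>
        rw [hfixlast]
        constructor
        · rintro ⟨h, -⟩
          rw [heapSplit_fst] at h
          exact upF_eq_none.mp h
        · intro h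
          exact ⟨by rw [heapSplit_fst, h]; rfl, fun w => no_parent_last F w⟩
      | cast u =>
        rw [hfixiff, ← h2 (heapSplit n F).2 u]
        constructor
        · rintro ⟨hnone, hnochild⟩
          refine ⟨⟨?_, fun w' hw' => ?_⟩, fun ho => ?_⟩
          · rw [heapSplit_snd] at hnone; exact upF_eq_none.mp hnone
          · exact hnochild w'.castSucc (by rw [heapSplit_snd, hw']; rfl)
          · exact hnochild (Fin.last n) (by rw [heapSplit_fst, ho]; rfl)
        · rintro ⟨⟨hnone, hnochild⟩, ho⟩
          refine ⟨by rw [heapSplit_snd, hnone]; rfl, fun w hw => ?_⟩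
          induction w using Fin.lastCases with
          | last => rw [heapSplit_fst] at hw; exact ho (upF_eq_some.mp hw)
          | cast w' => rw [heapSplit_snd] at hw; exact hnochild w' (upF_eq_some.mp hw)
    refine ⟨φ, ?_, hiso⟩
    intro F
    have hcount : ∀ (P : Fin (n + 1) → Prop) [DecidablePred P],
        (Finset.univ.filter P).card =
          (Finset.univ.filter fun u : Fin n => P u.castSucc).card +
            (if P (Fin.last n) then 1 else 0) := by
      intro P _
      rw [Finset.card_filter, Finset.card_filter, Fin.sum_univ_castSucc]
    have hL : (Finset.univ.filter fun v => F.1 v = none).card =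
        (Finset.univ.filter fun u : Fin n => (heapSplit n F).2.1 u = none).card +
          (if (heapSplit n F).1 = none then 1 else 0) := by
      rw [hcount]
      simp only [heapSplit_snd F, heapSplit_fst F, upF_eq_none]
    have hR : (Finset.univ.filter fun v => φ F v = v).card =
        (Finset.univ.filter fun u : Fin n => φ F u.castSucc = u.castSucc).card +
          (if φ F (Fin.last n) = Fin.last n then 1 else 0) := hcount _
    have hmain := h1 (heapSplit n F).2
    rcases ho : (heapSplit n F).1 with _ | k
    · -- top vertex is a root
      have hφF : φ F = finSuccEquivLast.symm.permCongr
          (Equiv.optionCongr (φ' (heapSplit n F).2)) := by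
        rw [hφdef F, ho, Equiv.swap_self, ← Equiv.Perm.one_def, one_mul]
      have hcyc : (φ F).cycleFactorsFinset.card =
          (φ' (heapSplit n F).2).cycleFactorsFinset.card := by
        rw [hφF, card_cycleFactorsFinset_eq, cycleType_permCongr', cycleType_optionCongr,
          ← card_cycleFactorsFinset_eq]
      have hfilter : (Finset.univ.filter fun u : Fin n => φ F u.castSucc = u.castSucc) =
          (Finset.univ.filter fun u => φ' (heapSplit n F).2 u = u) := by
        refine Finset.filter_congr fun u _ => ?_
        rw [hfixiff F u, ho]
        simp
      rw [hL, hR, hfilter, hcyc, ho, if_pos rfl, if_pos ((hfixlast F).mpr ho)]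
      omega
    · have hfl : ¬(φ F (Fin.last n) = Fin.last n) := by
        rw [hfixlast F, ho]; simp
      by_cases hk : φ' (heapSplit n F).2 k = k
      · -- attach to an isolated vertex: new 2-cycle
        have hφF2 : φ F = finSuccEquivLast.symm.permCongr
            (Equiv.swap none (some k) * Equiv.optionCongr (φ' (heapSplit n F).2)) := by
          rw [hφdef F, ho]
        have hdisj : (Equiv.swap (none : Option (Fin n)) (some k)).Disjoint
            (Equiv.optionCongr (φ' (heapSplit n F).2)) := by
          intro a
          cases a with
          | none => right; rfl
          | some a =>
            by_cases ha : a = k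
            · right; subst ha; simp [hk]
            · left; exact Equiv.swap_apply_of_ne_of_ne (by simp) (by simpa using ha)
        have h1c : Multiset.card
            (Equiv.swap (none : Option (Fin n)) (some k)).cycleType = 1 :=
          Equiv.Perm.card_cycleType_eq_one.mpr (Equiv.Perm.isCycle_swap (by simp))
        have hcyc : (φ F).cycleFactorsFinset.card =
            (φ' (heapSplit n F).2).cycleFactorsFinset.card + 1 := by
          rw [hφF2, card_cycleFactorsFinset_eq, cycleType_permCongr', hdisj.cycleType_mul,
            Multiset.card_add, h1c, cycleType_optionCongr, ← card_cycleFactorsFinset_eq]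
          omega
        have hfilter : (Finset.univ.filter fun u : Fin n => φ F u.castSucc = u.castSucc) =
            (Finset.univ.filter fun u => φ' (heapSplit n F).2 u = u).erase k := by
          ext u
          simp only [Finset.mem_erase, Finset.mem_filter, Finset.mem_univ, true_and]
          rw [hfixiff F u, ho]
          constructor
          · rintro ⟨ha, hb⟩
            exact ⟨fun h => hb (by rw [h]), ha⟩
          · rintro ⟨ha, hb⟩
            refine ⟨hb, fun h => ?_⟩
            injection h with h
            exact ha h.symm
        have hkmem : k ∈ Finset.univ.filter fun u => φ' (heapSplit n F).2 u = u :=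
          Finset.mem_filter.mpr ⟨Finset.mem_univ k, hk⟩
        have hpos : 0 < (Finset.univ.filter fun u => φ' (heapSplit n F).2 u = u).card :=
          Finset.card_pos.mpr ⟨k, hkmem⟩
        rw [hL, hR, hfilter, hcyc, ho, if_neg (Option.some_ne_none k), if_neg hfl,
          Finset.card_erase_of_mem hkmem]
        omega
      · -- attach to a non-isolated vertex: cycle count unchanged
        have hφF2 : φ F = finSuccEquivLast.symm.permCongr
            (Equiv.swap none (some k) * Equiv.optionCongr (φ' (heapSplit n F).2)) := by
          rw [hφdef F, ho]
        have hcyc : (φ F).cycleFactorsFinset.card =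
            (φ' (heapSplit n F).2).cycleFactorsFinset.card := by
          rw [hφF2, card_cycleFactorsFinset_eq, cycleType_permCongr',
            ← card_cycleFactorsFinset_eq,
            card_cycleFactorsFinset_swap_mul rfl (by simpa using hk),
            card_cycleFactorsFinset_eq, cycleType_optionCongr, ← card_cycleFactorsFinset_eq]
        have hfilter : (Finset.univ.filter fun u : Fin n => φ F u.castSucc = u.castSucc) =
            (Finset.univ.filter fun u => φ' (heapSplit n F).2 u = u) := by
          refine Finset.filter_congr fun u _ => ?_
          rw [hfixiff F u, ho]
          constructor
          · rintro ⟨ha, -⟩; exact ha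
          · intro ha
            refine ⟨ha, fun h => ?_⟩
            injection h with h
            exact hk (by rw [h]; exact ha)
        rw [hL, hR, hfilter, hcyc, ho, if_neg (Option.some_ne_none k), if_neg hfl]
        omega
end

section
/- The numbers f_{n,l} of heap-ordered forests with n edges, l trees, and no isolated vertices satisfy the recurrence f_{n,l} = (n+l−1)·f_{n−1,l} + (n+l−1)·f_{n−1,l−1}, with f_{0,0} = 1, f_{1,1} = 1, f_{0,l} = 0 for l ≥ 1, f_{1,l} = 0 for l ≠ 1, and f_{n,0} = 0 for n ≥ 1. -/
open Finset

/-- The forest predicate. -/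
def pred' (m l : ℕ) (par : Fin m → Option (Fin m)) : Prop :=
  (∀ v w, par v = some w → w < v) ∧
  (Finset.univ.filter (fun v => par v = none)).card = l ∧
  (∀ v, par v = none → ∃ w, par w = some v)

instance (m l : ℕ) : DecidablePred (pred' m l) := fun _ => by
  unfold pred'; infer_instance

/-- The number of heap-ordered forests with `n` edges, `l` trees and no isolated
vertices.  Such a forest has `n + l` vertices, identified with `{1,…,n+l}`; it is
encoded by a parent function with strictly decreasing labels towards the roots,
having exactly `l` roots and no isolated vertex (every root has a child). -/
noncomputable def hofCount (n l : ℕ) : ℕ :=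
  Nat.card {par : Fin (n + l) → Option (Fin (n + l)) //
    (∀ v w, par v = some w → w < v) ∧
    (Finset.univ.filter (fun v => par v = none)).card = l ∧
    (∀ v, par v = none → ∃ w, par w = some v)}

lemma hofCount_eq (n l : ℕ) :
    hofCount n l = (univ.filter (pred' (n + l) l)).card := by
  rw [hofCount, Nat.card_eq_fintype_card, Fintype.card_subtype]
  congr 1

lemma hofCount_eq' (n l m : ℕ) (h : n + l = m) :
    hofCount n l = (univ.filter (pred' m l)).card := by
  subst h; exact hofCount_eq n l

/-- The "bad" predicate: the parent `u` of the top vertex is a root with no other child. -/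
def Bpred (k : ℕ) (par : Fin (k + 2) → Option (Fin (k + 2))) : Prop :=
  ∃ u, par (Fin.last (k + 1)) = some u ∧ par u = none ∧
    ∀ x, par x = some u → x = Fin.last (k + 1)

instance (k : ℕ) : DecidablePred (Bpred k) := fun _ => by
  unfold Bpred; infer_instance

/-- value of the parent of the top vertex -/
def wval (k : ℕ) (par : Fin (k + 2) → Option (Fin (k + 2))) : ℕ :=
  (par (Fin.last (k + 1))).elim 0 Fin.val

def wtop (k : ℕ) (par : Fin (k + 2) → Option (Fin (k + 2))) : Fin (k + 1) :=
  ⟨min (wval k par) k, by omega⟩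

lemma wtop_val (k : ℕ) (par : Fin (k + 2) → Option (Fin (k + 2))) (u : Fin (k + 2))
    (hL : par (Fin.last (k + 1)) = some u) (hu : u.val < k + 1) :
    (wtop k par).val = u.val := by
  simp only [wtop, wval, hL, Option.elim]
  omega

/-- If `par` satisfies the forest predicate, the top vertex has a parent. -/
lemma pred'_parL (k l : ℕ) (par : Fin (k + 2) → Option (Fin (k + 2)))
    (hp : pred' (k + 2) (l + 1) par) :
    ∃ u, par (Fin.last (k + 1)) = some u ∧ u.val < k + 1 := by
  obtain ⟨hdec, _, hiso⟩ := hp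
  cases hL : par (Fin.last (k + 1)) with
  | none =>
    obtain ⟨w, hw⟩ := hiso _ hL
    have h1 := hdec _ _ hw
    have h2 := w.isLt
    simp only [Fin.lt_def, Fin.val_last] at h1
    omega
  | some u =>
    have h1 := hdec _ _ hL
    simp only [Fin.lt_def, Fin.val_last] at h1
    exact ⟨u, rfl, h1⟩

def castA (k : ℕ) (v : Fin (k + 1)) : Fin (k + 2) := ⟨v.val, by omega⟩

@[simp] lemma castA_val (k : ℕ) (v : Fin (k + 1)) : (castA k v).val = v.val := rfl

lemma castA_ne_last (k : ℕ) (v : Fin (k + 1)) : castA k v ≠ Fin.last (k + 1) := by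
  simp only [ne_eq, Fin.ext_iff, castA_val, Fin.val_last]
  have := v.isLt; omega

def shrink1 (k : ℕ) (o : Option (Fin (k + 2))) : Option (Fin (k + 1)) :=
  o.bind (fun y => if h : y.val < k + 1 then some ⟨y.val, h⟩ else none)

@[simp] lemma shrink1_none (k : ℕ) : shrink1 k none = none := rfl

lemma shrink1_some (k : ℕ) (y : Fin (k + 2)) (h : y.val < k + 1) :
    shrink1 k (some y) = some ⟨y.val, h⟩ := by simp [shrink1, h]; omega

def fwdA (k : ℕ) (par : Fin (k + 2) → Option (Fin (k + 2))) :
    Fin (k + 1) × (Fin (k + 1) → Option (Fin (k + 1))) :=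
  (wtop k par, fun v => shrink1 k (par (castA k v)))

def bwdA (k : ℕ) (wq : Fin (k + 1) × (Fin (k + 1) → Option (Fin (k + 1)))) :
    Fin (k + 2) → Option (Fin (k + 2)) :=
  fun v =>
    if h : v.val = k + 1 then some (castA k wq.1)
    else (wq.2 ⟨v.val, by have := v.isLt; omega⟩).map (castA k)

section CaseA

variable (k l : ℕ) (par : Fin (k + 2) → Option (Fin (k + 2)))

lemma fwdA_snd_none (hdec : ∀ v w, par v = some w → w < v) (v : Fin (k + 1)) :
    (fwdA k par).2 v = none ↔ par (castA k v) = none := by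
  cases hpar : par (castA k v) with
  | none => simp [fwdA, hpar]
  | some y =>
    have hy := hdec _ _ hpar
    simp only [Fin.lt_def, castA_val] at hy
    have hy' : y.val < k + 1 := by have := v.isLt; omega
    simp [fwdA, hpar, shrink1_some k y hy']

lemma fwdA_snd_some (hdec : ∀ v w, par v = some w → w < v) (v : Fin (k + 1))
    (y : Fin (k + 2)) (hpar : par (castA k v) = some y) (hy' : y.val < k + 1) :
    (fwdA k par).2 v = some ⟨y.val, hy'⟩ := by
  simp [fwdA, hpar, shrink1_some k y hy']

lemma fwdA_mem (hp : pred' (k + 2) (l + 1) par) (hB : ¬ Bpred k par) :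
    pred' (k + 1) (l + 1) (fwdA k par).2 := by
  obtain ⟨hdec, hcard, hiso⟩ := hp
  obtain ⟨u, hL, hu⟩ := pred'_parL k l par ⟨hdec, hcard, hiso⟩
  have hval : ∀ (v : Fin (k + 1)) (y : Fin (k + 2)), par (castA k v) = some y → y.val < k + 1 := by
    intro v y hpar
    have hy := hdec _ _ hpar
    simp only [Fin.lt_def, castA_val] at hy
    have := v.isLt; omega
  refine ⟨?_, ?_, ?_⟩
  · -- decreasing
    intro v y h
    cases hpar : par (castA k v) with
    | none => simp [fwdA, hpar] at h
    | some z =>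
      rw [fwdA_snd_some k par hdec v z hpar (hval v z hpar)] at h
      have hz := hdec _ _ hpar
      simp only [Fin.lt_def, castA_val] at hz
      rw [Option.some_inj] at h
      subst h
      simpa [Fin.lt_def] using hz
  · -- root count
    rw [← hcard]
    apply card_nbij' (i := fun v : Fin (k + 1) => castA k v) (j := fun x : Fin (k + 2) => ⟨min x.val k, by omega⟩)
    · intro v hv
      simp only [mem_coe, mem_filter, mem_univ, true_and] at hv ⊢
      exact (fwdA_snd_none k par hdec v).mp hv
    · intro x hx
      simp only [mem_coe, mem_filter, mem_univ, true_and] at hx ⊢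
      have hxL : x ≠ Fin.last (k + 1) := by
        intro h; rw [h, hL] at hx; exact absurd hx (by simp)
      have hxk : x.val ≤ k := by
        have := x.isLt
        have : x.val ≠ k + 1 := fun h => hxL (by simpa [Fin.ext_iff, Fin.val_last] using h)
        omega
      rw [fwdA_snd_none k par hdec]
      have : castA k ⟨min x.val k, by omega⟩ = x := by
        simp [Fin.ext_iff]; omega
      rw [this]; exact hx
    · intro v hv
      simp [Fin.ext_iff]
      have := v.isLt; omega
    · intro x hx
      simp only [mem_coe, mem_filter, mem_univ, true_and] at hx
      have hxL : x ≠ Fin.last (k + 1) := by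
        intro h; rw [h, hL] at hx; exact absurd hx (by simp)
      have hxk : x.val ≤ k := by
        have := x.isLt
        have : x.val ≠ k + 1 := fun h => hxL (by simpa [Fin.ext_iff, Fin.val_last] using h)
        omega
      simp [castA, Fin.ext_iff]; omega
  · -- no isolated roots
    intro v hv
    rw [fwdA_snd_none k par hdec] at hv
    obtain ⟨x, hx⟩ := hiso _ hv
    by_cases hxL : x = Fin.last (k + 1)
    · -- the only child found is the top vertex; use ¬ Bpred to find another one
      rw [hxL, hL] at hx
      rw [Option.some_inj] at hx
      subst hx
      have : ¬ ∀ x, par x = some (castA k v) → x = Fin.last (k + 1) := by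
        intro hall
        exact hB ⟨castA k v, hL, hv, hall⟩
      push_neg at this
      obtain ⟨x', hx', hx'L⟩ := this
      have hx'k : x'.val ≤ k := by
        have := x'.isLt
        have : x'.val ≠ k + 1 := fun h => hx'L (by simpa [Fin.ext_iff, Fin.val_last] using h)
        omega
      refine ⟨⟨x'.val, by omega⟩, ?_⟩
      have hcast : castA k ⟨x'.val, by omega⟩ = x' := by simp [Fin.ext_iff]
      rw [fwdA_snd_some k par hdec _ _ (by rw [hcast]; exact hx')
        (by simpa using v.isLt)]
      simp [Fin.ext_iff]
    · have hxk : x.val ≤ k := by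
        have := x.isLt
        have : x.val ≠ k + 1 := fun h => hxL (by simpa [Fin.ext_iff, Fin.val_last] using h)
        omega
      refine ⟨⟨x.val, by omega⟩, ?_⟩
      have hcast : castA k ⟨x.val, by omega⟩ = x := by simp [Fin.ext_iff]
      rw [fwdA_snd_some k par hdec _ _ (by rw [hcast]; exact hx)
        (by simpa using v.isLt)]
      simp [Fin.ext_iff]

end CaseA

section CaseA2

variable (k l : ℕ)

lemma bwdA_last (wq : Fin (k + 1) × (Fin (k + 1) → Option (Fin (k + 1)))) :
    bwdA k wq (Fin.last (k + 1)) = some (castA k wq.1) := by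
  simp [bwdA, Fin.val_last]

lemma bwdA_not_last (wq : Fin (k + 1) × (Fin (k + 1) → Option (Fin (k + 1))))
    (v : Fin (k + 1)) :
    bwdA k wq (castA k v) = (wq.2 v).map (castA k) := by
  have h : (castA k v).val ≠ k + 1 := by have := v.isLt; simp [castA]; omega
  simp only [bwdA, dif_neg h]
  rfl

lemma bwdA_mem (w : Fin (k + 1)) (q : Fin (k + 1) → Option (Fin (k + 1)))
    (hq : pred' (k + 1) (l + 1) q) :
    pred' (k + 2) (l + 1) (bwdA k (w, q)) ∧ ¬ Bpred k (bwdA k (w, q)) := by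
  obtain ⟨hdec, hcard, hiso⟩ := hq
  set par := bwdA k (w, q) with hpar
  have hnone : ∀ v : Fin (k + 1), par (castA k v) = none ↔ q v = none := by
    intro v
    rw [hpar, bwdA_not_last]
    simp
  have hL : par (Fin.last (k + 1)) = some (castA k w) := bwdA_last k (w, q)
  have hmain : pred' (k + 2) (l + 1) par := by
    refine ⟨?_, ?_, ?_⟩
    · intro v y h
      rw [hpar, bwdA] at h
      split at h
      · rw [Option.some_inj] at h
        subst h
        simp only [Fin.lt_def, castA_val]
        have := w.isLt; omega
      · rw [Option.map_eq_some_iff] at h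
        obtain ⟨z, hz, rfl⟩ := h
        have := hdec _ _ hz
        simp only [Fin.lt_def, castA_val] at this ⊢
        simpa using this
    · rw [← hcard]
      symm
      apply card_nbij' (i := fun v : Fin (k + 1) => castA k v)
        (j := fun x : Fin (k + 2) => ⟨min x.val k, by omega⟩)
      · intro v hv
        simp only [mem_coe, mem_filter, mem_univ, true_and] at hv ⊢
        rw [hnone]; exact hv
      · intro x hx
        simp only [mem_coe, mem_filter, mem_univ, true_and] at hx ⊢
        have hxL : x ≠ Fin.last (k + 1) := by
          intro h; rw [h, hL] at hx; exact absurd hx (by simp)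
        have hxk : x.val ≤ k := by
          have := x.isLt
          have : x.val ≠ k + 1 := fun h => hxL (Fin.ext (by simpa [Fin.val_last] using h))
          omega
        have hc : castA k ⟨min x.val k, by omega⟩ = x := by simp [Fin.ext_iff]; omega
        rw [← hc] at hx
        rw [← hnone]; exact hx
      · intro v hv; simp [Fin.ext_iff]; have := v.isLt; omega
      · intro x hx
        simp only [mem_coe, mem_filter, mem_univ, true_and] at hx
        have hxL : x ≠ Fin.last (k + 1) := by
          intro h; rw [h, hL] at hx; exact absurd hx (by simp)
        have hxk : x.val ≤ k := by
          have := x.isLt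
          have : x.val ≠ k + 1 := fun h => hxL (Fin.ext (by simpa [Fin.val_last] using h))
          omega
        simp [castA, Fin.ext_iff]; omega
    · intro v hv
      have hvL : v ≠ Fin.last (k + 1) := by
        intro h; rw [h, hL] at hv; exact absurd hv (by simp)
      have hvk : v.val ≤ k := by
        have := v.isLt
        have : v.val ≠ k + 1 := fun h => hvL (Fin.ext (by simpa [Fin.val_last] using h))
        omega
      have hc : castA k ⟨v.val, by omega⟩ = v := by simp [Fin.ext_iff]
      rw [← hc, hnone] at hv
      obtain ⟨x, hx⟩ := hiso _ hv
      refine ⟨castA k x, ?_⟩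
      rw [hpar, bwdA_not_last]
      show Option.map (castA k) (q x) = some v
      rw [hx, Option.map_some, hc]
  refine ⟨hmain, ?_⟩
  rintro ⟨u, hu1, hu2, hu3⟩
  rw [hL, Option.some_inj] at hu1
  subst hu1
  -- so q w = none, and w has a child in q, giving a non-top child of castA k w
  have hqw : q w = none := by
    have hc : castA k w = castA k w := rfl
    rw [← hnone]; exact hu2
  obtain ⟨x, hx⟩ := hiso _ hqw
  have : par (castA k x) = some (castA k w) := by
    rw [hpar, bwdA_not_last]
    show Option.map (castA k) (q x) = some (castA k w)
    rw [hx]; rfl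
  have := hu3 _ this
  exact castA_ne_last k x this

lemma bwdA_fwdA (par : Fin (k + 2) → Option (Fin (k + 2)))
    (hp : pred' (k + 2) (l + 1) par) : bwdA k (fwdA k par) = par := by
  obtain ⟨u, hL, hu⟩ := pred'_parL k l par hp
  obtain ⟨hdec, hcard, hiso⟩ := hp
  funext v
  by_cases hv : v.val = k + 1
  · have hvL : v = Fin.last (k + 1) := Fin.ext (by simpa [Fin.val_last] using hv)
    subst hvL
    rw [bwdA_last, hL]
    congr 1
    have := wtop_val k par u hL hu
    simp only [fwdA]
    exact Fin.ext (by simp [this])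
  · have hvk : v.val ≤ k := by have := v.isLt; omega
    have hc : castA k ⟨v.val, by omega⟩ = v := by simp [Fin.ext_iff]
    conv_lhs => rw [← hc]
    rw [bwdA_not_last]
    simp only [fwdA, hc]
    cases hpar : par v with
    | none => simp
    | some y =>
      have hy := hdec _ _ hpar
      simp only [Fin.lt_def] at hy
      have hy' : y.val < k + 1 := by omega
      rw [shrink1_some k y hy']
      simp [Fin.ext_iff]

lemma fwdA_bwdA (w : Fin (k + 1)) (q : Fin (k + 1) → Option (Fin (k + 1))) :
    fwdA k (bwdA k (w, q)) = (w, q) := by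
  have hL : bwdA k (w, q) (Fin.last (k + 1)) = some (castA k w) := bwdA_last k (w, q)
  have hw : wtop k (bwdA k (w, q)) = w := by
    apply Fin.ext
    rw [wtop_val k _ (castA k w) hL (by have := w.isLt; simpa using this)]
    rfl
  refine Prod.ext ?_ ?_
  · exact hw
  · funext v
    simp only [fwdA]
    rw [bwdA_not_last]
    show shrink1 k (Option.map (castA k) (q v)) = q v
    cases hq : q v with
    | none => simp
    | some y =>
      simp only [Option.map_some]
      rw [shrink1_some k (castA k y) (by have := y.isLt; simpa using this)]
      simp [Fin.ext_iff]

lemma cardA :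
    (univ.filter fun par : Fin (k + 2) → Option (Fin (k + 2)) =>
        pred' (k + 2) (l + 1) par ∧ ¬ Bpred k par).card =
      (k + 1) * (univ.filter (pred' (k + 1) (l + 1))).card := by
  have : (k + 1) * (univ.filter (pred' (k + 1) (l + 1))).card =
      ((univ : Finset (Fin (k + 1))) ×ˢ univ.filter (pred' (k + 1) (l + 1))).card := by
    rw [card_product, card_univ, Fintype.card_fin]
  rw [this]
  apply card_nbij' (i := fwdA k) (j := bwdA k)
  · intro par hpar
    simp only [mem_coe, mem_filter, mem_univ, true_and] at hpar
    rw [mem_coe, mem_product]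
    refine ⟨mem_univ _, ?_⟩
    simp only [mem_coe, mem_filter, mem_univ, true_and]
    exact fwdA_mem k l par hpar.1 hpar.2
  · intro wq hwq
    rw [mem_coe, mem_product] at hwq
    simp only [mem_coe, mem_filter, mem_univ, true_and] at hwq ⊢
    have hq : pred' (k + 1) (l + 1) wq.2 := hwq
    obtain ⟨h1, h2⟩ := bwdA_mem k l wq.1 wq.2 hq
    exact ⟨h1, h2⟩
  · intro par hpar
    simp only [mem_coe, mem_filter, mem_univ, true_and] at hpar
    exact bwdA_fwdA k l par hpar.1
  · intro wq hwq
    exact fwdA_bwdA k wq.1 wq.2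

end CaseA2

def upB (k : ℕ) (W : Fin (k + 1)) (v : Fin k) : Fin (k + 2) :=
  ⟨if v.val < W.val then v.val else v.val + 1, by have := v.isLt; split <;> omega⟩

lemma upB_val (k : ℕ) (W : Fin (k + 1)) (v : Fin k) :
    (upB k W v).val = if v.val < W.val then v.val else v.val + 1 := rfl

lemma upB_le (k : ℕ) (W : Fin (k + 1)) (v : Fin k) : (upB k W v).val ≤ k := by
  rw [upB_val]; have := v.isLt; split <;> omega

lemma upB_ne_W (k : ℕ) (W : Fin (k + 1)) (v : Fin k) : (upB k W v).val ≠ W.val := by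
  rw [upB_val]; split <;> omega

lemma exists_upB (k : ℕ) (W : Fin (k + 1)) (x : Fin (k + 2)) (h1 : x.val ≤ k)
    (h2 : x.val ≠ W.val) : ∃ v : Fin k, upB k W v = x := by
  have hW := W.isLt
  refine ⟨⟨if x.val < W.val then x.val else x.val - 1, by split <;> omega⟩, ?_⟩
  apply Fin.ext
  rw [upB_val]
  simp only [Fin.val_mk]
  split_ifs <;> omega

def shrink2 (k : ℕ) (W : Fin (k + 1)) (o : Option (Fin (k + 2))) : Option (Fin k) :=
  o.bind fun y =>
    if h : y.val < W.val ∧ y.val < k then some ⟨y.val, h.2⟩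
    else if h : W.val < y.val ∧ y.val - 1 < k then some ⟨y.val - 1, h.2⟩ else none

@[simp] lemma shrink2_none (k : ℕ) (W : Fin (k + 1)) : shrink2 k W none = none := rfl

lemma shrink2_some_lt (k : ℕ) (W : Fin (k + 1)) (y : Fin (k + 2))
    (h1 : y.val < W.val) (h2 : y.val < k) :
    shrink2 k W (some y) = some ⟨y.val, h2⟩ := by
  simp only [shrink2, Option.bind]
  rw [dif_pos ⟨h1, h2⟩]

lemma shrink2_some_gt (k : ℕ) (W : Fin (k + 1)) (y : Fin (k + 2))
    (h1 : W.val < y.val) (h2 : y.val - 1 < k) :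
    shrink2 k W (some y) = some ⟨y.val - 1, h2⟩ := by
  simp only [shrink2, Option.bind]
  rw [dif_neg (by omega), dif_pos ⟨h1, h2⟩]

lemma shrink2_upB (k : ℕ) (W : Fin (k + 1)) (v : Fin k) :
    shrink2 k W (some (upB k W v)) = some v := by
  have hv := v.isLt
  by_cases h : v.val < W.val
  · rw [shrink2_some_lt k W _ (by rw [upB_val]; rw [if_pos h]; exact h)
      (by rw [upB_val]; rw [if_pos h]; omega)]
    exact congrArg some (Fin.ext (by simp only [upB_val, Fin.val_mk]; rw [if_pos h]))
  · rw [shrink2_some_gt k W _ (by rw [upB_val]; rw [if_neg h]; omega)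
      (by rw [upB_val]; rw [if_neg h]; omega)]
    exact congrArg some (Fin.ext (by simp only [upB_val, Fin.val_mk]; rw [if_neg h]; omega))

def fwdB (k : ℕ) (par : Fin (k + 2) → Option (Fin (k + 2))) :
    Fin (k + 1) × (Fin k → Option (Fin k)) :=
  (wtop k par, fun v => shrink2 k (wtop k par) (par (upB k (wtop k par) v)))

def bwdB (k : ℕ) (wq : Fin (k + 1) × (Fin k → Option (Fin k))) :
    Fin (k + 2) → Option (Fin (k + 2)) :=
  fun v =>
    if h1 : v.val = k + 1 then some (castA k wq.1)
    else if h2 : v.val = wq.1.val then none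
    else (wq.2 ⟨if v.val < wq.1.val then v.val else v.val - 1,
        by have := v.isLt; have := wq.1.isLt; split <;> omega⟩).map (upB k wq.1)

lemma bwdB_last (k : ℕ) (wq : Fin (k + 1) × (Fin k → Option (Fin k))) :
    bwdB k wq (Fin.last (k + 1)) = some (castA k wq.1) := by
  simp [bwdB, Fin.val_last]

lemma bwdB_W (k : ℕ) (wq : Fin (k + 1) × (Fin k → Option (Fin k))) :
    bwdB k wq (castA k wq.1) = none := by
  have h1 : (castA k wq.1).val ≠ k + 1 := by have := wq.1.isLt; simp [castA]; omega
  have h2 : (castA k wq.1).val = wq.1.val := rfl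
  simp only [bwdB, dif_neg h1, dif_pos h2]

lemma bwdB_upB (k : ℕ) (wq : Fin (k + 1) × (Fin k → Option (Fin k))) (v : Fin k) :
    bwdB k wq (upB k wq.1 v) = (wq.2 v).map (upB k wq.1) := by
  have h1 : (upB k wq.1 v).val ≠ k + 1 := by have := upB_le k wq.1 v; omega
  have h2 : (upB k wq.1 v).val ≠ wq.1.val := upB_ne_W k wq.1 v
  simp only [bwdB, dif_neg h1, dif_neg h2]
  congr 1
  have hidx : (⟨if (upB k wq.1 v).val < wq.1.val then (upB k wq.1 v).val else (upB k wq.1 v).val - 1,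
      by have := upB_le k wq.1 v; have := wq.1.isLt; split <;> omega⟩ : Fin k) = v := by
    apply Fin.ext
    have := v.isLt
    simp only [upB_val, Fin.val_mk]
    split_ifs <;> omega
  exact congrArg _ hidx

section CaseB

variable (k l : ℕ) (par : Fin (k + 2) → Option (Fin (k + 2)))

lemma fwdB_mem (hp : pred' (k + 2) (l + 1) par) (hB : Bpred k par) :
    pred' k l (fwdB k par).2 := by
  obtain ⟨hdec, hcard, hiso⟩ := hp
  obtain ⟨u, hL, hu2, hu3⟩ := hB
  have hu : u.val < k + 1 := by
    have := hdec _ _ hL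
    simp only [Fin.lt_def, Fin.val_last] at this
    omega
  have hW : (wtop k par).val = u.val := wtop_val k par u hL hu
  have hne_last : ∀ v : Fin k, upB k (wtop k par) v ≠ Fin.last (k + 1) := by
    intro v h
    have := upB_le k (wtop k par) v
    rw [h, Fin.val_last] at this
    omega
  have hfacts : ∀ (v : Fin k) (y : Fin (k + 2)), par (upB k (wtop k par) v) = some y →
      y.val < k ∧ y.val ≠ (wtop k par).val ∧
        y.val < (if v.val < (wtop k par).val then v.val else v.val + 1) := by
    intro v y hpar
    have hy := hdec _ _ hpar
    rw [Fin.lt_def, upB_val] at hy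
    have hyk : y.val < k := by have := v.isLt; split at hy <;> omega
    have hyne : y ≠ u := by
      intro h
      exact hne_last v (hu3 _ (h ▸ hpar))
    have hyW : y.val ≠ (wtop k par).val := by
      rw [hW]; exact fun h => hyne (Fin.ext h)
    exact ⟨hyk, hyW, hy⟩
  have hq_none : ∀ v : Fin k, (fwdB k par).2 v = none ↔ par (upB k (wtop k par) v) = none := by
    intro v
    cases hpar : par (upB k (wtop k par) v) with
    | none => simp [fwdB, hpar]
    | some y =>
      obtain ⟨hyk, hyW, _⟩ := hfacts v y hpar
      simp only [fwdB, hpar]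
      rcases lt_or_gt_of_ne hyW with h | h
      · rw [shrink2_some_lt k _ y h hyk]; simp
      · rw [shrink2_some_gt k _ y h (by omega)]; simp
  have hupdn : ∀ (x : Fin (k + 2)), x.val ≤ k → x.val ≠ (wtop k par).val →
      ∀ (h : (if x.val < (wtop k par).val then x.val else x.val - 1) < k),
      upB k (wtop k par) ⟨if x.val < (wtop k par).val then x.val else x.val - 1, h⟩ = x := by
    intro x hx1 hx2 h
    apply Fin.ext
    rw [upB_val]
    simp only [Fin.val_mk]
    split_ifs <;> omega
  have hdn_lt : ∀ (x : Fin (k + 2)), x.val ≤ k → x.val ≠ (wtop k par).val →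
      (if x.val < (wtop k par).val then x.val else x.val - 1) < k := by
    intro x hx1 hx2
    have := (wtop k par).isLt
    split <;> omega
  refine ⟨?_, ?_, ?_⟩
  · -- decreasing
    intro v z h
    cases hpar : par (upB k (wtop k par) v) with
    | none => simp [fwdB, hpar] at h
    | some y =>
      obtain ⟨hyk, hyW, hy⟩ := hfacts v y hpar
      simp only [fwdB, hpar] at h
      rw [Fin.lt_def]
      rcases lt_or_gt_of_ne hyW with hc | hc
      · rw [shrink2_some_lt k _ y hc hyk, Option.some_inj] at h
        subst h
        simp only [Fin.val_mk]
        split at hy <;> omega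
      · rw [shrink2_some_gt k _ y hc (by omega), Option.some_inj] at h
        subst h
        simp only [Fin.val_mk]
        split at hy <;> omega
  · -- root count
    have hu_mem : u ∈ univ.filter (fun v => par v = none) := by
      simp only [mem_filter, mem_univ, true_and]; exact hu2
    have herase : ((univ.filter (fun v => par v = none)).erase u).card = l := by
      rw [card_erase_of_mem hu_mem, hcard]
      omega
    rw [← herase]
    refine card_bij' (fun v _ => upB k (wtop k par) v)
      (fun x hx => ⟨if x.val < (wtop k par).val then x.val else x.val - 1, by
        simp only [mem_erase, mem_filter, mem_univ, true_and] at hx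
        have hxL : x ≠ Fin.last (k + 1) := by
          intro h; rw [h, hL] at hx; exact absurd hx.2 (by simp)
        have hxk : x.val ≤ k := by
          have := x.isLt
          have : x.val ≠ k + 1 := fun h => hxL (Fin.ext (by simpa [Fin.val_last] using h))
          omega
        have hxW : x.val ≠ (wtop k par).val := by
          rw [hW]; exact fun h => hx.1 (Fin.ext h)
        exact hdn_lt x hxk hxW⟩) ?_ ?_ ?_ ?_
    · intro v hv
      simp only [mem_filter, mem_univ, true_and] at hv
      simp only [mem_erase, mem_filter, mem_univ, true_and]
      constructor
      · intro h
        have := upB_ne_W k (wtop k par) v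
        rw [h, hW] at this
        exact this rfl
      · exact (hq_none v).mp hv
    · intro x hx
      have hx' := hx
      simp only [mem_erase, mem_filter, mem_univ, true_and] at hx'
      have hxL : x ≠ Fin.last (k + 1) := by
        intro h; rw [h, hL] at hx'; exact absurd hx'.2 (by simp)
      have hxk : x.val ≤ k := by
        have := x.isLt
        have : x.val ≠ k + 1 := fun h => hxL (Fin.ext (by simpa [Fin.val_last] using h))
        omega
      have hxW : x.val ≠ (wtop k par).val := by
        rw [hW]; exact fun h => hx'.1 (Fin.ext h)
      simp only [mem_filter, mem_univ, true_and]
      rw [hq_none, hupdn x hxk hxW]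
      exact hx'.2
    · intro v hv
      apply Fin.ext
      have := v.isLt
      simp only [upB_val, Fin.val_mk]
      split_ifs <;> omega
    · intro x hx
      have hx' := hx
      simp only [mem_erase, mem_filter, mem_univ, true_and] at hx'
      have hxL : x ≠ Fin.last (k + 1) := by
        intro h; rw [h, hL] at hx'; exact absurd hx'.2 (by simp)
      have hxk : x.val ≤ k := by
        have := x.isLt
        have : x.val ≠ k + 1 := fun h => hxL (Fin.ext (by simpa [Fin.val_last] using h))
        omega
      have hxW : x.val ≠ (wtop k par).val := by
        rw [hW]; exact fun h => hx'.1 (Fin.ext h)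
      exact hupdn x hxk hxW _
  · -- no isolated roots
    intro v hv
    rw [hq_none] at hv
    obtain ⟨x, hx⟩ := hiso _ hv
    have hxL : x ≠ Fin.last (k + 1) := by
      intro h
      rw [h, hL, Option.some_inj] at hx
      have := upB_ne_W k (wtop k par) v
      rw [← hx, hW] at this
      exact this rfl
    have hxk : x.val ≤ k := by
      have := x.isLt
      have : x.val ≠ k + 1 := fun h => hxL (Fin.ext (by simpa [Fin.val_last] using h))
      omega
    have hxu : x ≠ u := by
      intro h; rw [h, hu2] at hx; exact absurd hx (by simp)
    have hxW : x.val ≠ (wtop k par).val := by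
      rw [hW]; exact fun h => hxu (Fin.ext h)
    refine ⟨⟨if x.val < (wtop k par).val then x.val else x.val - 1, hdn_lt x hxk hxW⟩, ?_⟩
    simp only [fwdB]
    rw [hupdn x hxk hxW, hx, shrink2_upB]

end CaseB

section CaseB2

variable (k l : ℕ)

lemma upB_dn (W : Fin (k + 1)) (x : Fin (k + 2)) (h1 : x.val ≤ k) (h2 : x.val ≠ W.val)
    (h : (if x.val < W.val then x.val else x.val - 1) < k) :
    upB k W ⟨if x.val < W.val then x.val else x.val - 1, h⟩ = x := by
  apply Fin.ext
  rw [upB_val]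
  simp only [Fin.val_mk]
  split_ifs <;> omega

lemma dn_lt (W : Fin (k + 1)) (x : Fin (k + 2)) (h1 : x.val ≤ k) (h2 : x.val ≠ W.val) :
    (if x.val < W.val then x.val else x.val - 1) < k := by
  have := W.isLt; split <;> omega

lemma bwdB_mem (w : Fin (k + 1)) (q : Fin k → Option (Fin k)) (hq : pred' k l q) :
    pred' (k + 2) (l + 1) (bwdB k (w, q)) ∧ Bpred k (bwdB k (w, q)) := by
  obtain ⟨hdec, hcard, hiso⟩ := hq
  have hL : bwdB k (w, q) (Fin.last (k + 1)) = some (castA k w) := bwdB_last k (w, q)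
  have hwnone : bwdB k (w, q) (castA k w) = none := bwdB_W k (w, q)
  have hup : ∀ v : Fin k, bwdB k (w, q) (upB k w v) = (q v).map (upB k w) := bwdB_upB k (w, q)
  have hwk : w.val ≤ k := by have := w.isLt; omega
  have hvcases : ∀ v : Fin (k + 2), v.val ≠ k + 1 → v.val ≠ w.val →
      ∃ v₀ : Fin k, upB k w v₀ = v := by
    intro v h1 h2
    exact exists_upB k w v (by have := v.isLt; omega) h2
  have hmain : pred' (k + 2) (l + 1) (bwdB k (w, q)) := by
    refine ⟨?_, ?_, ?_⟩
    · -- decreasing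
      intro v y h
      by_cases h1 : v.val = k + 1
      · have hv : v = Fin.last (k + 1) := Fin.ext (by simpa [Fin.val_last] using h1)
        rw [hv, hL, Option.some_inj] at h
        subst h
        rw [Fin.lt_def, hv]
        simp only [castA, Fin.val_mk, Fin.val_last]
        omega
      · by_cases h2 : v.val = w.val
        · have hv : v = castA k w := Fin.ext (by simpa [castA] using h2)
          rw [hv, hwnone] at h
          exact absurd h (by simp)
        · obtain ⟨v₀, hv₀⟩ := hvcases v h1 h2
          rw [← hv₀, hup] at h
          rw [Option.map_eq_some_iff] at h
          obtain ⟨z, hz, rfl⟩ := h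
          have hzv := hdec _ _ hz
          rw [Fin.lt_def] at hzv ⊢
          rw [← hv₀]
          simp only [upB_val]
          split_ifs <;> omega
    · -- root count
      have hmemw : castA k w ∈ univ.filter (fun v => bwdB k (w, q) v = none) := by
        simp only [mem_filter, mem_univ, true_and]; exact hwnone
      have herase :
          ((univ.filter (fun v => bwdB k (w, q) v = none)).erase (castA k w)).card = l := by
        rw [← hcard]
        refine card_bij'
          (fun x hx => (⟨if x.val < w.val then x.val else x.val - 1, by
            simp only [mem_erase, mem_filter, mem_univ, true_and] at hx
            have hxL : x.val ≠ k + 1 := by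
              intro h
              have : x = Fin.last (k + 1) := Fin.ext (by simpa [Fin.val_last] using h)
              rw [this, hL] at hx
              exact absurd hx.2 (by simp)
            have hxw : x.val ≠ w.val := by
              intro h
              exact hx.1 (Fin.ext (by simpa [castA] using h))
            exact dn_lt k w x (by have := x.isLt; omega) hxw⟩ : Fin k))
          (fun v _ => upB k w v) ?_ ?_ ?_ ?_
        · intro x hx
          have hx' := hx
          simp only [mem_erase, mem_filter, mem_univ, true_and] at hx'
          have hxL : x.val ≠ k + 1 := by
            intro h
            have : x = Fin.last (k + 1) := Fin.ext (by simpa [Fin.val_last] using h)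
            rw [this, hL] at hx'
            exact absurd hx'.2 (by simp)
          have hxk : x.val ≤ k := by have := x.isLt; omega
          have hxw : x.val ≠ w.val := by
            intro h
            exact hx'.1 (Fin.ext (by simpa [castA] using h))
          simp only [mem_filter, mem_univ, true_and]
          have hux := upB_dn k w x hxk hxw (dn_lt k w x hxk hxw)
          have := hup ⟨if x.val < w.val then x.val else x.val - 1, dn_lt k w x hxk hxw⟩
          rw [hux] at this
          rw [hx'.2] at this
          exact (Option.map_eq_none_iff).mp this.symm
        · intro v hv
          simp only [mem_filter, mem_univ, true_and] at hv
          simp only [mem_erase, mem_filter, mem_univ, true_and]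
          constructor
          · intro h
            have := upB_ne_W k w v
            rw [h] at this
            exact this rfl
          · rw [hup, hv]; rfl
        · intro x hx
          have hx' := hx
          simp only [mem_erase, mem_filter, mem_univ, true_and] at hx'
          have hxL : x.val ≠ k + 1 := by
            intro h
            have : x = Fin.last (k + 1) := Fin.ext (by simpa [Fin.val_last] using h)
            rw [this, hL] at hx'
            exact absurd hx'.2 (by simp)
          have hxk : x.val ≤ k := by have := x.isLt; omega
          have hxw : x.val ≠ w.val := by
            intro h
            exact hx'.1 (Fin.ext (by simpa [castA] using h))
          exact upB_dn k w x hxk hxw _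
        · intro v hv
          apply Fin.ext
          have := v.isLt
          simp only [upB_val, Fin.val_mk]
          split_ifs <;> omega
      have h1 := card_erase_of_mem hmemw
      have hpos : 0 < (univ.filter (fun v => bwdB k (w, q) v = none)).card :=
        card_pos.mpr ⟨castA k w, hmemw⟩
      omega
    · -- no isolated roots
      intro v hv
      have hvL : v.val ≠ k + 1 := by
        intro h
        have : v = Fin.last (k + 1) := Fin.ext (by simpa [Fin.val_last] using h)
        rw [this, hL] at hv
        exact absurd hv (by simp)
      by_cases hvw : v.val = w.val
      · refine ⟨Fin.last (k + 1), ?_⟩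
        rw [hL]
        exact congrArg some (Fin.ext (show (castA k w).val = v.val by simp only [castA, Fin.val_mk]; omega))
      · obtain ⟨v₀, hv₀⟩ := hvcases v hvL hvw
        rw [← hv₀, hup] at hv
        have hqv : q v₀ = none := (Option.map_eq_none_iff).mp hv
        obtain ⟨x, hx⟩ := hiso _ hqv
        refine ⟨upB k w x, ?_⟩
        rw [hup, hx, Option.map_some, hv₀]
  refine ⟨hmain, castA k w, hL, hwnone, ?_⟩
  intro x hx
  by_cases h1 : x.val = k + 1
  · exact Fin.ext (by simpa [Fin.val_last] using h1)
  · by_cases h2 : x.val = w.val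
    · have hv : x = castA k w := Fin.ext (by simpa [castA] using h2)
      rw [hv, hwnone] at hx
      exact absurd hx (by simp)
    · obtain ⟨x₀, hx₀⟩ := hvcases x h1 h2
      rw [← hx₀, hup] at hx
      rw [Option.map_eq_some_iff] at hx
      obtain ⟨z, _, hz⟩ := hx
      have := upB_ne_W k w z
      rw [hz] at this
      simp [castA] at this

lemma bwdB_fwdB (par : Fin (k + 2) → Option (Fin (k + 2)))
    (hp : pred' (k + 2) (l + 1) par) (hB : Bpred k par) :
    bwdB k (fwdB k par) = par := by
  obtain ⟨hdec, hcard, hiso⟩ := hp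
  obtain ⟨u, hL, hu2, hu3⟩ := hB
  have hu : u.val < k + 1 := by
    have := hdec _ _ hL
    simp only [Fin.lt_def, Fin.val_last] at this
    omega
  have hW : (wtop k par).val = u.val := wtop_val k par u hL hu
  have hfst : (fwdB k par).1 = wtop k par := rfl
  have hsnd : ∀ v₀, (fwdB k par).2 v₀ =
      shrink2 k (wtop k par) (par (upB k (wtop k par) v₀)) := fun _ => rfl
  funext v
  by_cases h1 : v.val = k + 1
  · have hv : v = Fin.last (k + 1) := Fin.ext (by simpa [Fin.val_last] using h1)
    rw [hv]
    have hb := bwdB_last k (fwdB k par)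
    rw [hfst] at hb
    rw [hb, hL]
    exact congrArg some (Fin.ext (by simp only [castA, Fin.val_mk]; exact hW))
  · by_cases h2 : v.val = (wtop k par).val
    · have hv : v = castA k (wtop k par) := Fin.ext (by simpa [castA] using h2)
      have hb := bwdB_W k (fwdB k par)
      rw [hfst] at hb
      rw [hv, hb]
      have hv2 : castA k (wtop k par) = u := Fin.ext (by simp only [castA, Fin.val_mk]; exact hW)
      rw [hv2, hu2]
    · have hvk : v.val ≤ k := by have := v.isLt; omega
      obtain ⟨v₀, hv₀⟩ := exists_upB k (wtop k par) v hvk h2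
      have hb := bwdB_upB k (fwdB k par) v₀
      rw [hfst, hsnd] at hb
      rw [hv₀] at hb
      rw [hb]
      cases hpv : par v with
      | none => simp
      | some y =>
        have hyv := hdec _ _ hpv
        rw [Fin.lt_def] at hyv
        have hyk : y.val ≤ k := by omega
        have hyu : y ≠ u := by
          intro h
          have := hu3 v (h ▸ hpv)
          rw [this, Fin.val_last] at h1
          exact h1 rfl
        have hyW : y.val ≠ (wtop k par).val := by
          rw [hW]; exact fun h => hyu (Fin.ext h)
        rcases lt_or_gt_of_ne hyW with hc | hc
        · rw [shrink2_some_lt k _ y hc (by have := (wtop k par).isLt; omega), Option.map_some]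
          exact congrArg some (Fin.ext (by rw [upB_val]; simp only [Fin.val_mk]; rw [if_pos hc]))
        · rw [shrink2_some_gt k _ y hc (by omega), Option.map_some]
          refine congrArg some (Fin.ext ?_)
          rw [upB_val]
          simp only [Fin.val_mk]
          split_ifs <;> omega

lemma fwdB_bwdB (w : Fin (k + 1)) (q : Fin k → Option (Fin k)) :
    fwdB k (bwdB k (w, q)) = (w, q) := by
  have hL : bwdB k (w, q) (Fin.last (k + 1)) = some (castA k w) := bwdB_last k (w, q)
  have hw : wtop k (bwdB k (w, q)) = w := by
    apply Fin.ext
    rw [wtop_val k _ (castA k w) hL (by have := w.isLt; simpa [castA] using this)]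
    rfl
  refine Prod.ext hw ?_
  funext v
  simp only [fwdB, hw]
  rw [bwdB_upB]
  show shrink2 k w (Option.map (upB k w) (q v)) = q v
  cases hq : q v with
  | none => rfl
  | some y =>
    rw [Option.map_some, shrink2_upB]

lemma cardB :
    (univ.filter fun par : Fin (k + 2) → Option (Fin (k + 2)) =>
        pred' (k + 2) (l + 1) par ∧ Bpred k par).card =
      (k + 1) * (univ.filter (pred' k l)).card := by
  have : (k + 1) * (univ.filter (pred' k l)).card =
      ((univ : Finset (Fin (k + 1))) ×ˢ univ.filter (pred' k l)).card := by
    rw [card_product, card_univ, Fintype.card_fin]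
  rw [this]
  apply card_nbij' (i := fwdB k) (j := bwdB k)
  · intro par hpar
    simp only [mem_coe, mem_filter, mem_univ, true_and] at hpar
    rw [mem_coe, mem_product]
    refine ⟨mem_univ _, ?_⟩
    simp only [mem_coe, mem_filter, mem_univ, true_and]
    exact fwdB_mem k l par hpar.1 hpar.2
  · intro wq hwq
    rw [mem_coe, mem_product] at hwq
    simp only [mem_coe, mem_filter, mem_univ, true_and] at hwq ⊢
    have hq : pred' k l wq.2 := hwq
    obtain ⟨h1, h2⟩ := bwdB_mem k l wq.1 wq.2 hq
    exact ⟨h1, h2⟩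
  · intro par hpar
    simp only [mem_coe, mem_filter, mem_univ, true_and] at hpar
    exact bwdB_fwdB k l par hpar.1 hpar.2
  · intro wq hwq
    exact fwdB_bwdB k wq.1 wq.2

end CaseB2

lemma key (k l : ℕ) :
    (univ.filter (pred' (k + 2) (l + 1))).card =
      (k + 1) * (univ.filter (pred' (k + 1) (l + 1))).card +
        (k + 1) * (univ.filter (pred' k l)).card := by
  classical
  have hsplit := card_filter_add_card_filter_not
    (s := univ.filter (pred' (k + 2) (l + 1))) (p := Bpred k)
  rw [filter_filter, filter_filter] at hsplit
  rw [← hsplit, cardA k l, cardB k l]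
  ring

/-- The numbers `f_{n,l}` of heap-ordered forests with `n` edges, `l` trees and
no isolated vertices satisfy
`f_{n,l} = (n+l−1)·f_{n−1,l} + (n+l−1)·f_{n−1,l−1}`, with the initial conditions
`f_{0,0}=1`, `f_{1,1}=1`, `f_{0,l}=0` for `l ≥ 1`, `f_{1,l}=0` for `l ≠ 1`, and
`f_{n,0}=0` for `n ≥ 1`. -/
theorem hofCount_recurrence :
    hofCount 0 0 = 1 ∧
    hofCount 1 1 = 1 ∧
    (∀ l, 1 ≤ l → hofCount 0 l = 0) ∧
    (∀ l, l ≠ 1 → hofCount 1 l = 0) ∧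
    (∀ n, 1 ≤ n → hofCount n 0 = 0) ∧
    (∀ n l, 1 ≤ n → 1 ≤ l →
      hofCount n l =
        (n + l - 1) * hofCount (n - 1) l + (n + l - 1) * hofCount (n - 1) (l - 1)) := by
  have hzero : ∀ n, 1 ≤ n → hofCount n 0 = 0 := by
    intro n hn
    rw [hofCount_eq, Finset.card_eq_zero, Finset.eq_empty_iff_forall_notMem]
    intro par hpar
    simp only [mem_filter, mem_univ, true_and] at hpar
    obtain ⟨hdec, hcard, _⟩ := hpar
    have h0 : par ⟨0, by omega⟩ = none := by
      cases h : par ⟨0, by omega⟩ with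
      | none => rfl
      | some y =>
        have := hdec _ _ h
        rw [Fin.lt_def] at this
        simp at this
    have : (⟨0, by omega⟩ : Fin (n + 0)) ∈ univ.filter (fun v => par v = none) := by
      simp only [mem_filter, mem_univ, true_and]; exact h0
    rw [Finset.card_eq_zero.mp hcard] at this
    exact absurd this (notMem_empty _)
  refine ⟨?_, ?_, ?_, ?_, hzero, ?_⟩
  · rw [hofCount_eq]; decide
  · rw [hofCount_eq]; decide
  · -- n = 0, l ≥ 1
    intro l hl
    rw [hofCount_eq, Finset.card_eq_zero, Finset.eq_empty_iff_forall_notMem]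
    intro par hpar
    simp only [mem_filter, mem_univ, true_and] at hpar
    obtain ⟨hdec, hcard, hiso⟩ := hpar
    have hall : univ.filter (fun v => par v = none) = univ := by
      apply Finset.eq_univ_of_card
      rw [hcard]
      simp
    have hnone : ∀ v : Fin (0 + l), par v = none := by
      intro v
      have : v ∈ univ.filter (fun v => par v = none) := by rw [hall]; exact mem_univ v
      simpa using this
    obtain ⟨w, hw⟩ := hiso ⟨0, by omega⟩ (hnone _)
    rw [hnone w] at hw
    exact absurd hw (by simp)
  · -- n = 1, l ≠ 1
    intro l hl
    rcases Nat.eq_zero_or_pos l with rfl | hlpos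
    · exact hzero 1 le_rfl
    have hl2 : 2 ≤ l := by omega
    rw [hofCount_eq, Finset.card_eq_zero, Finset.eq_empty_iff_forall_notMem]
    intro par hpar
    simp only [mem_filter, mem_univ, true_and] at hpar
    obtain ⟨hdec, hcard, hiso⟩ := hpar
    -- each root has a child; children are non-roots; map roots → children injectively
    set R := univ.filter (fun v : Fin (1 + l) => par v = none) with hR
    set C := univ.filter (fun v : Fin (1 + l) => ¬ par v = none) with hC
    have hcardsum : R.card + C.card = 1 + l := by
      rw [hR, hC]
      rw [card_filter_add_card_filter_not]
      simp
    have hinj : R.card ≤ C.card := by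
      apply Finset.card_le_card_of_injOn
        (f := fun v => if h : par v = none then Classical.choose (hiso v h) else v)
      · intro v hv
        simp only [hR, mem_coe, mem_filter, mem_univ, true_and] at hv ⊢
        rw [dif_pos hv]
        have := Classical.choose_spec (hiso v hv)
        simp only [hC, mem_filter, mem_univ, true_and]
        rw [this]
        simp
      · intro v1 hv1 v2 hv2 heq
        simp only [hR, coe_filter, Set.mem_setOf_eq, mem_univ, true_and] at hv1 hv2
        simp only [dif_pos hv1, dif_pos hv2] at heq
        have h1 := Classical.choose_spec (hiso v1 hv1)
        have h2 := Classical.choose_spec (hiso v2 hv2)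
        rw [heq, h2] at h1
        exact (Option.some_inj.mp h1).symm
    omega
  · -- the recurrence
    intro n l hn hl
    obtain ⟨a, rfl⟩ : ∃ a, n = a + 1 := ⟨n - 1, by omega⟩
    obtain ⟨b, rfl⟩ : ∃ b, l = b + 1 := ⟨l - 1, by omega⟩
    have e2 : a + 1 - 1 = a := by omega
    have e3 : b + 1 - 1 = b := by omega
    rw [e2, e3, hofCount_eq' (a + 1) (b + 1) (a + b + 2) (by omega),
      hofCount_eq' a (b + 1) (a + b + 1) (by omega), hofCount_eq' a b (a + b) rfl,
      key (a + b) b]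
    simp only [show a + 1 + (b + 1) - 1 = a + b + 1 from by omega]
end

section
/- For a rooted forest F and subsets f ⊆ e ⊆ E(F), one has Part_f(Part_e(F)) = Part_f(F) and Cont_f(Part_e(F)) = Part_{e∖f}(Cont_f(F)), and Cont_{e∖f}(Cont_f(F)) = Cont_e(F); consequently the contraction coproduct Δ(F) = Σ_{e ⊆ E(F)} Part_e(F) ⊗ Cont_e(F) is coassociative. -/
attribute [local instance] Classical.propDecidable

/-- A rooted forest on a vertex type `V`: each vertex has an optional parent
(edges are oriented towards the roots), and the parent relation is acyclic
(well-founded).  An edge is identified with its child endpoint. -/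
structure PForest (V : Type) where
  par : V → Option V
  wf : WellFounded (fun a b : V => par b = some a)

namespace PForest

variable {V : Type}

/-- The set of edges of `F`, each edge being identified with its child endpoint
(a non-root vertex). -/
def edgeSet (F : PForest V) : Set V := {v | F.par v ≠ none}

/-- The number of vertices `|F|_v`. -/
noncomputable def vcount (_ : PForest V) : ℕ := Nat.card V

/-- The number of edges `|F|_e`. -/
noncomputable def ecount (F : PForest V) : ℕ := Nat.card {v : V // F.par v ≠ none}

/-- The length `l(F)`: the number of connected components, i.e. of roots. -/
noncomputable def lcount (F : PForest V) : ℕ := Nat.card {v : V // F.par v = none}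

/-- `Part_e(F)`: the subforest keeping all vertices of `F` and only the edges
belonging to `e`. -/
noncomputable def partF (F : PForest V) (e : Set V) : PForest V where
  par := fun v => if v ∈ e then F.par v else none
  wf := Subrelation.wf
    (fun {a b} h => by
      by_cases hb : b ∈ e
      · simpa [hb] using h
      · simp [hb] at h)
    F.wf

/-- The root of the connected component of `v` in `Part_e(F)`: follow parent
edges belonging to `e` as long as possible. -/
noncomputable def eRoot (F : PForest V) (e : Set V) : V → V :=
  F.wf.fix fun v ih =>
    if v ∈ e then
      match hp : F.par v with
      | some w => ih w hp
      | none => v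
    else v

theorem eRoot_root (F : PForest V) (e : Set V) (v : V) :
    (F.partF e).par (F.eRoot e v) = none := by
  refine F.wf.induction (C := fun x => (F.partF e).par (F.eRoot e x) = none) v
    (fun x ih => ?_)
  show (F.partF e).par (F.eRoot e x) = none
  unfold eRoot
  rw [WellFounded.fix_eq]
  by_cases hx : x ∈ e
  · simp only [hx, if_true]
    split
    · next w heq => exact ih w heq
    · next heq => simp [partF, hx, heq]
  · simp [partF, hx]

theorem eRoot_reaches (F : PForest V) (e : Set V) (v : V) :
    Relation.ReflTransGen (fun x y : V => F.par y = some x) (F.eRoot e v) v := by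
  refine F.wf.induction
    (C := fun x => Relation.ReflTransGen (fun x y : V => F.par y = some x) (F.eRoot e x) x) v
    (fun x ih => ?_)
  show Relation.ReflTransGen (fun x y : V => F.par y = some x) (F.eRoot e x) x
  unfold eRoot
  rw [WellFounded.fix_eq]
  by_cases hx : x ∈ e
  · simp only [hx, if_true]
    split
    · next w heq => exact Relation.ReflTransGen.tail (ih w heq) heq
    · exact Relation.ReflTransGen.refl
  · simp only [hx, if_false]
    exact Relation.ReflTransGen.refl

/-- `Cont_e(F)`: the forest obtained by contracting each edge of `e`.  Its
vertices are the connected components of `Part_e(F)` (identified with their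
roots), and the parent of a component is the component of the parent of its
root. -/
noncomputable def contF (F : PForest V) (e : Set V) :
    PForest {v : V // (F.partF e).par v = none} where
  par := fun v =>
    match F.par v.1 with
    | none => none
    | some w => if v.1 ∈ e then none else some ⟨F.eRoot e w, F.eRoot_root e w⟩
  wf := by
    refine Subrelation.wf (fun {a b} h => ?_)
      (InvImage.wf (fun v => v.1) F.wf.transGen)
    have h' : (match F.par b.1 with
        | none => none
        | some w => if b.1 ∈ e then none else some ⟨F.eRoot e w, F.eRoot_root e w⟩)
        = some a := h
    clear h
    rcases hb : F.par b.1 with _ | w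
    · rw [hb] at h'; exact absurd h' (by simp)
    · rw [hb] at h'
      by_cases hbe : b.1 ∈ e
      · simp [hbe] at h'
      · simp only [hbe, if_false, Option.some.injEq] at h'
        have ha : (a.1 : V) = F.eRoot e w := by rw [← h']
        show Relation.TransGen (fun a b : V => F.par b = some a) a.1 b.1
        rw [ha]
        exact Relation.TransGen.tail' (F.eRoot_reaches e w) hb

theorem pext (F G : PForest V) (h : F.par = G.par) : F = G := by
  cases F; cases G; cases h; rfl

theorem partF_par (F : PForest V) (e : Set V) (v : V) :
    (F.partF e).par v = if v ∈ e then F.par v else none := rfl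

theorem contF_par (F : PForest V) (e : Set V) (w : {v : V // (F.partF e).par v = none}) :
    (F.contF e).par w = match F.par w.1 with
      | none => none
      | some u => if w.1 ∈ e then none else some ⟨F.eRoot e u, F.eRoot_root e u⟩ := rfl

theorem eRoot_of_notMem (F : PForest V) {e : Set V} {v : V} (hv : v ∉ e) :
    F.eRoot e v = v := by
  unfold eRoot; rw [WellFounded.fix_eq]; simp [hv]

theorem eRoot_of_par_none (F : PForest V) (e : Set V) {v : V} (hp : F.par v = none) :
    F.eRoot e v = v := by
  unfold eRoot; rw [WellFounded.fix_eq]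
  by_cases hv : v ∈ e
  · simp only [hv, if_true]
    split
    · next w heq => rw [hp] at heq; cases heq
    · rfl
  · simp [hv]

theorem eRoot_of_par_some (F : PForest V) {e : Set V} {v w : V} (hv : v ∈ e)
    (hp : F.par v = some w) : F.eRoot e v = F.eRoot e w := by
  conv_lhs => unfold eRoot
  rw [WellFounded.fix_eq]
  simp only [hv, if_true]
  split
  · next u heq =>
    rw [hp] at heq; cases heq; rfl
  · next heq => rw [hp] at heq; cases heq

theorem partF_eRoot (F : PForest V) {e f : Set V} (hf : f ⊆ e) (v : V) :
    (F.partF e).eRoot f v = F.eRoot f v := by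
  refine F.wf.induction (C := fun x => (F.partF e).eRoot f x = F.eRoot f x) v fun x ih => ?_
  show (F.partF e).eRoot f x = F.eRoot f x
  by_cases hx : x ∈ f
  · rcases hp : F.par x with _ | w
    · rw [F.eRoot_of_par_none f hp, (F.partF e).eRoot_of_par_none f (by simp [partF_par, hp])]
    · have hp' : (F.partF e).par x = some w := by simp [partF_par, hf hx, hp]
      rw [(F.partF e).eRoot_of_par_some hx hp', F.eRoot_of_par_some hx hp]
      exact ih w hp
  · rw [eRoot_of_notMem _ hx, eRoot_of_notMem _ hx]

theorem eRoot_eRoot (F : PForest V) {e f : Set V} (hf : f ⊆ e) (v : V) :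
    F.eRoot e (F.eRoot f v) = F.eRoot e v := by
  refine F.wf.induction (C := fun x => F.eRoot e (F.eRoot f x) = F.eRoot e x) v fun x ih => ?_
  show F.eRoot e (F.eRoot f x) = F.eRoot e x
  by_cases hx : x ∈ f
  · rcases hp : F.par x with _ | w
    · rw [F.eRoot_of_par_none f hp]
    · rw [F.eRoot_of_par_some hx hp, F.eRoot_of_par_some (hf hx) hp]
      exact ih w hp
  · rw [F.eRoot_of_notMem hx]

/-- On a vertex of `Cont_f(F)`, the `e∖f`-root in `Cont_f(F)` lies over the
`e`-root in `F`. -/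
theorem contF_eRoot (F : PForest V) {e f : Set V} (he : e ⊆ F.edgeSet) (hf : f ⊆ e)
    (x : {v : V // (F.partF f).par v = none}) :
    ((F.contF f).eRoot {w : {v : V // (F.partF f).par v = none} | (w : V) ∈ e \ f} x).1
      = F.eRoot e x.1 := by
  set S : Set {v : V // (F.partF f).par v = none} := {w | (w : V) ∈ e \ f} with hS
  refine (F.contF f).wf.induction
    (C := fun y => ((F.contF f).eRoot S y).1 = F.eRoot e y.1) x fun y ih => ?_
  show ((F.contF f).eRoot S y).1 = F.eRoot e y.1
  by_cases hy : y ∈ S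
  · have hye : y.1 ∈ e := hy.1
    have hyf : y.1 ∉ f := hy.2
    have hpar : F.par y.1 ≠ none := he hye
    rcases hp : F.par y.1 with _ | u
    · exact absurd hp hpar
    · have hcp : (F.contF f).par y = some ⟨F.eRoot f u, F.eRoot_root f u⟩ := by
        rw [contF_par, hp]; simp [hyf]
      rw [(F.contF f).eRoot_of_par_some hy hcp, ih _ hcp, F.eRoot_of_par_some hye hp]
      exact F.eRoot_eRoot hf u
  · rw [(F.contF f).eRoot_of_notMem hy]
    rcases hp : F.par y.1 with _ | u
    · rw [F.eRoot_of_par_none e hp]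
    · have hyf : y.1 ∉ f := by
        intro hyf
        have := y.2
        rw [partF_par, if_pos hyf, hp] at this
        cases this
      have hye : y.1 ∉ e := fun hye => hy ⟨hye, hyf⟩
      rw [F.eRoot_of_notMem hye]

end PForest

/-- An isomorphism of rooted forests: a bijection of vertex sets commuting with
the parent maps. -/
structure PForestIso {V W : Type} (F : PForest V) (G : PForest W) where
  toEquiv : V ≃ W
  map_par : ∀ v : V, G.par (toEquiv v) = (F.par v).map toEquiv

/-- For a rooted forest `F` and subsets `f ⊆ e ⊆ E(F)` one has
`Part_f(Part_e(F)) = Part_f(F)`, `Cont_f(Part_e(F)) = Part_{e∖f}(Cont_f(F))`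
and `Cont_{e∖f}(Cont_f(F)) = Cont_e(F)` (the latter two as isomorphisms over
the identity on underlying vertices); these are the identities from which the
coassociativity of the contraction coproduct
`Δ(F) = Σ_{e ⊆ E(F)} Part_e(F) ⊗ Cont_e(F)` follows. -/
theorem part_cont_identities (V : Type) [Finite V] (F : PForest V) (e f : Set V)
    (he : e ⊆ F.edgeSet) (hf : f ⊆ e) :
    (F.partF e).partF f = F.partF f ∧
    (∃ φ : PForestIso ((F.partF e).contF f)
        ((F.contF f).partF {w : {v : V // (F.partF f).par v = none} | (w : V) ∈ e \ f}),
      ∀ w, ((φ.toEquiv w : {v : V // (F.partF f).par v = none}) : V) = (w : V)) ∧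
    (∃ ψ : PForestIso
        ((F.contF f).contF {w : {v : V // (F.partF f).par v = none} | (w : V) ∈ e \ f})
        (F.contF e),
      ∀ w, ((ψ.toEquiv w : {v : V // (F.partF e).par v = none}) : V)
          = ((w : {v : V // (F.partF f).par v = none}) : V)) := by
  open PForest in
  have h1 : (F.partF e).partF f = F.partF f := by
    refine PForest.pext _ _ (funext fun v => ?_)
    simp only [partF_par]
    by_cases hv : v ∈ f <;> simp [hv, fun h => hf h]
  set S : Set {v : V // (F.partF f).par v = none} := {w | (w : V) ∈ e \ f} with hS
  -- vertices of `Cont_f(Part_e(F))` and of `Cont_f(F)` agree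
  have hAB : ∀ v : V, ((F.partF e).partF f).par v = none ↔ (F.partF f).par v = none := by
    intro v; rw [h1]
  -- non-root in `f` forces not in `f`
  have hnotf : ∀ v : V, (F.partF f).par v = none → F.par v ≠ none → v ∉ f := by
    intro v hv hp hvf
    rw [partF_par, if_pos hvf] at hv
    exact hp hv
  refine ⟨h1, ?_, ?_⟩
  · -- the middle isomorphism
    refine ⟨⟨⟨fun w => ⟨w.1, (hAB w.1).mp w.2⟩, fun w => ⟨w.1, (hAB w.1).mpr w.2⟩,
        fun _ => rfl, fun _ => rfl⟩, ?_⟩, fun _ => rfl⟩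
    intro w
    simp only [Equiv.coe_fn_mk]
    rcases hp : F.par w.1 with _ | u
    · have hp' : (F.partF e).par w.1 = none := by simp [partF_par, hp]
      have hL : ((F.partF e).contF f).par w = none := by rw [contF_par, hp']
      have hR : (F.contF f).par ⟨w.1, (hAB w.1).mp w.2⟩ = none := by rw [contF_par, hp]
      rw [hL]
      show ((F.contF f).partF S).par _ = none
      rw [partF_par]
      split <;> simp [hR]
    · have hwf : w.1 ∉ f := by
        intro hwf
        have h2 := w.2
        rw [partF_par, if_pos hwf, partF_par, if_pos (hf hwf), hp] at h2
        cases h2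
      by_cases hwe : w.1 ∈ e
      · have hp' : (F.partF e).par w.1 = some u := by simp [partF_par, hwe, hp]
        have hL : ((F.partF e).contF f).par w
            = some ⟨(F.partF e).eRoot f u, (F.partF e).eRoot_root f u⟩ := by
          rw [contF_par, hp']; simp [hwf]
        have hmem : (⟨w.1, (hAB w.1).mp w.2⟩ : {v : V // (F.partF f).par v = none}) ∈ S :=
          ⟨hwe, hwf⟩
        have hR : (F.contF f).par ⟨w.1, (hAB w.1).mp w.2⟩
            = some ⟨F.eRoot f u, F.eRoot_root f u⟩ := by
          rw [contF_par, hp]; simp [hwf]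
        show ((F.contF f).partF S).par _ = _
        rw [partF_par, if_pos hmem, hR, hL]
        simp only [Option.map_some]
        congr 1
        exact Subtype.ext ((F.partF_eRoot (f := f) hf u).symm)
      · have hp' : (F.partF e).par w.1 = none := by simp [partF_par, hwe]
        have hL : ((F.partF e).contF f).par w = none := by rw [contF_par, hp']
        have hmem : (⟨w.1, (hAB w.1).mp w.2⟩ : {v : V // (F.partF f).par v = none}) ∉ S := by
          intro h; exact hwe h.1
        show ((F.contF f).partF S).par _ = _
        rw [partF_par, if_neg hmem, hL]
        rfl
  · -- the right isomorphism
    -- the roots of `Part_S(Cont_f F)` correspond to the roots of `Part_e F`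
    have hCD : ∀ w : {v : V // (F.partF f).par v = none},
        ((F.contF f).partF S).par w = none ↔ (F.partF e).par w.1 = none := by
      intro w
      rcases hp : F.par w.1 with _ | u
      · have hR : (F.partF e).par w.1 = none := by simp [partF_par, hp]
        have hc : (F.contF f).par w = none := by rw [contF_par, hp]
        rw [partF_par, hR]
        split <;> simp [hc]
      · have hwf : w.1 ∉ f := hnotf w.1 w.2 (by rw [hp]; simp)
        have hc : (F.contF f).par w = some ⟨F.eRoot f u, F.eRoot_root f u⟩ := by
          rw [contF_par, hp]; simp [hwf]
        by_cases hwe : w.1 ∈ e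
        · have hmem : w ∈ S := ⟨hwe, hwf⟩
          rw [partF_par, if_pos hmem, hc, partF_par, if_pos hwe, hp]
          simp
        · have hmem : w ∉ S := fun h => hwe h.1
          rw [partF_par, if_neg hmem, partF_par, if_neg hwe]
          exact iff_of_true rfl rfl
    have pf1 : ∀ v : V, (F.partF e).par v = none → (F.partF f).par v = none := by
      intro v hv
      rw [partF_par]
      split
      · next hvf =>
        rw [partF_par, if_pos (hf hvf)] at hv
        exact hv
      · rfl
    refine ⟨⟨⟨fun w => ⟨w.1.1, (hCD w.1).mp w.2⟩,
        fun v => ⟨⟨v.1, pf1 v.1 v.2⟩, (hCD ⟨v.1, pf1 v.1 v.2⟩).mpr v.2⟩,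
        fun _ => rfl, fun _ => rfl⟩, ?_⟩, fun _ => rfl⟩
    intro w
    simp only [Equiv.coe_fn_mk]
    rcases hp : F.par w.1.1 with _ | u
    · have hc : (F.contF f).par w.1 = none := by rw [contF_par, hp]
      have hL : (F.contF e).par ⟨w.1.1, (hCD w.1).mp w.2⟩ = none := by rw [contF_par, hp]
      have hR : ((F.contF f).contF S).par w = none := by rw [contF_par, hc]
      rw [hL, hR]
      rfl
    · have hwf : w.1.1 ∉ f := hnotf w.1.1 w.1.2 (by rw [hp]; simp)
      have hc : (F.contF f).par w.1 = some ⟨F.eRoot f u, F.eRoot_root f u⟩ := by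
        rw [contF_par, hp]; simp [hwf]
      have hwe : w.1.1 ∉ e := by
        intro hwe
        have h2 := w.2
        rw [partF_par, if_pos (show w.1 ∈ S from ⟨hwe, hwf⟩), hc] at h2
        cases h2
      have hmem : w.1 ∉ S := fun h => hwe h.1
      have hL : (F.contF e).par ⟨w.1.1, (hCD w.1).mp w.2⟩
          = some ⟨F.eRoot e u, F.eRoot_root e u⟩ := by
        rw [contF_par, hp]; simp [hwe]
      have hR : ((F.contF f).contF S).par w
          = some ⟨(F.contF f).eRoot S ⟨F.eRoot f u, F.eRoot_root f u⟩,
              (F.contF f).eRoot_root S _⟩ := by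
        rw [contF_par, hc]; simp [hmem]
      rw [hL, hR]
      simp only [Option.map_some]
      congr 1
      refine Subtype.ext ?_
      show (F.eRoot e u : V) = _
      have := F.contF_eRoot he hf ⟨F.eRoot f u, F.eRoot_root f u⟩
      rw [this]
      exact (F.eRoot_eRoot hf u).symm
end

section
/- For any rooted tree T with n vertices, the set of pairs (v, (σ₁, σ₂)) where v is a nontrivial admissible cut of T, σ₁ is a linear order on Lea_v(T), and σ₂ is a linear order on Roo_v(T), is in bijection with the set of pairs (σ, p) where σ is a linear order on T and p ∈ {1,…,n−1}. -/
attribute [local instance] Classical.propDecidable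

/-- `a ↠ b`: there is an oriented path (towards the root) from `a` to `b` in the
forest encoded by the parent function `par`. -/
def Reaches {n : ℕ} (par : Fin n → Option (Fin n)) : Fin n → Fin n → Prop :=
  Relation.ReflTransGen (fun a b : Fin n => par a = some b)

/-- A linear order on the set `s` of vertices: a bijection
`σ : s → {1,…,card s}` such that `a ↠ b` implies `σ(a) ≥ σ(b)`. -/
def LinOrdOn {n : ℕ} (par : Fin n → Option (Fin n)) (s : Finset (Fin n)) :=
  {σ : {w : Fin n // w ∈ s} ≃ Fin s.card //
    ∀ a b : {w : Fin n // w ∈ s}, Reaches par a.1 b.1 → (σ b : ℕ) ≤ (σ a : ℕ)}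

/-- `Lea_v(T)`: the vertices lying above the cut `v` (including `v`). -/
noncomputable def lea {n : ℕ} (par : Fin n → Option (Fin n)) (v : Finset (Fin n)) :
    Finset (Fin n) :=
  Finset.univ.filter fun w => ∃ x ∈ v, Reaches par w x

/-- The data of a nontrivial admissible cut `v` of the tree (a nonempty, nontotal
totally disconnected set of vertices) together with linear orders on
`Lea_v(T)` and on `Roo_v(T)` (the complement of `Lea_v(T)`). -/
structure CutData (n : ℕ) (par : Fin n → Option (Fin n)) where
  cut : Finset (Fin n)
  admissible : ∀ a ∈ cut, ∀ b ∈ cut, a ≠ b → ¬ Reaches par a b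
  nonempty : cut.Nonempty
  nontotal : ∃ r, par r = none ∧ r ∉ cut
  σ₁ : LinOrdOn par (lea par cut)
  σ₂ : LinOrdOn par (Finset.univ \ lea par cut)

/-- The data of a linear order on the whole tree together with an integer
`p ∈ {1,…,n−1}`. -/
structure OrderData (n : ℕ) (par : Fin n → Option (Fin n)) where
  σ : LinOrdOn par Finset.univ
  p : ℕ
  hp₁ : 1 ≤ p
  hp₂ : p ≤ n - 1

open Finset

section Aux
variable {n : ℕ} {par : Fin n → Option (Fin n)}

lemma lea_up {cut : Finset (Fin n)} {a b : Fin n} (h : Reaches par a b)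
    (hb : b ∈ lea par cut) : a ∈ lea par cut := by
  simp only [lea, Finset.mem_filter, Finset.mem_univ, true_and] at hb ⊢
  obtain ⟨x, hx, hr⟩ := hb
  exact ⟨x, hx, Relation.ReflTransGen.trans h hr⟩

lemma cut_subset_lea {cut : Finset (Fin n)} : cut ⊆ lea par cut := fun w hw => by
  simp only [lea, Finset.mem_filter, Finset.mem_univ, true_and]
  exact ⟨w, hw, Relation.ReflTransGen.refl⟩

lemma no_cycle (hwf : WellFounded (fun a b : Fin n => par b = some a))
    {a u : Fin n} (hu : par a = some u) (h : Reaches par u a) : False := by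
  have h1 : Relation.TransGen (fun x y : Fin n => par x = some y) a a :=
    Relation.TransGen.head' hu h
  have h2 : Relation.TransGen (fun a b : Fin n => par b = some a) a a :=
    Relation.TransGen.swap _ _ h1
  exact (hwf.transGen).isIrrefl.irrefl a h2

lemma reaches_root (hwf : WellFounded (fun a b : Fin n => par b = some a))
    {r : Fin n} (hr : ∀ w : Fin n, par w = none → w = r) (w : Fin n) :
    Reaches par w r := by
  induction w using hwf.induction with
  | _ w IH =>
    cases hpw : par w with
    | none => exact (hr w hpw) ▸ Relation.ReflTransGen.refl
    | some u => exact Relation.ReflTransGen.head hpw (IH u hpw)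

lemma root_reaches_eq {r w : Fin n} (hr : par r = none) (h : Reaches par r w) :
    w = r := by
  rcases Relation.ReflTransGen.cases_head h with h' | ⟨c, hc, _⟩
  · exact h'.symm
  · rw [hr] at hc; cases hc

lemma exists_min (hwf : WellFounded (fun a b : Fin n => par b = some a))
    (P : Fin n → Prop) : ∀ w, P w →
    ∃ x, Reaches par w x ∧ P x ∧ ∀ u, par x = some u → ¬ P u := by
  intro w
  induction w using hwf.induction with
  | _ w IH =>
    intro hw
    cases hpw : par w with
    | none => exact ⟨w, Relation.ReflTransGen.refl, hw, fun u hu => by rw [hpw] at hu; cases hu⟩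
    | some u =>
      by_cases hPu : P u
      · obtain ⟨x, hx1, hx2, hx3⟩ := IH u hpw hPu
        exact ⟨x, Relation.ReflTransGen.head hpw hx1, hx2, hx3⟩
      · refine ⟨w, Relation.ReflTransGen.refl, hw, fun v hv => ?_⟩
        rw [hpw] at hv; cases hv; exact hPu

lemma cut_char (hwf : WellFounded (fun a b : Fin n => par b = some a))
    {cut : Finset (Fin n)}
    (hadm : ∀ a ∈ cut, ∀ b ∈ cut, a ≠ b → ¬ Reaches par a b) (w : Fin n) :
    w ∈ cut ↔ w ∈ lea par cut ∧ ∀ u, par w = some u → u ∉ lea par cut := by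
  constructor
  · intro hw
    refine ⟨cut_subset_lea hw, fun u hu hule => ?_⟩
    simp only [lea, Finset.mem_filter, Finset.mem_univ, true_and] at hule
    obtain ⟨x, hx, hux⟩ := hule
    have hwx : Reaches par w x := Relation.ReflTransGen.head hu hux
    by_cases hxw : x = w
    · subst hxw; exact no_cycle hwf hu hux
    · exact hadm w hw x hx (fun h => hxw h.symm) hwx
  · rintro ⟨hle, hmin⟩
    simp only [lea, Finset.mem_filter, Finset.mem_univ, true_and] at hle
    obtain ⟨x, hx, hwx⟩ := hle
    rcases Relation.ReflTransGen.cases_head hwx with h | ⟨c, hc, hcx⟩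
    · exact h ▸ hx
    · exact absurd (lea_up hcx (cut_subset_lea hx)) (hmin c hc)

lemma linOrdOn_cast_val {s t : Finset (Fin n)} (h : s = t) (σ : LinOrdOn par s)
    (w : Fin n) (hw : w ∈ t) :
    (((h ▸ σ : LinOrdOn par t)).1 ⟨w, hw⟩ : ℕ) = (σ.1 ⟨w, h ▸ hw⟩ : ℕ) := by
  subst h; rfl

end Aux

section Fwd
variable {n : ℕ}

noncomputable def splitEquiv (L : Finset (Fin n)) :
    {w : Fin n // w ∈ (Finset.univ : Finset (Fin n))} ≃
      {w : Fin n // w ∈ Finset.univ \ L} ⊕ {w : Fin n // w ∈ L} where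
  toFun w := if h : w.1 ∈ L then Sum.inr ⟨w.1, h⟩
    else Sum.inl ⟨w.1, by simp [Finset.mem_sdiff, h]⟩
  invFun x := Sum.elim (fun a => ⟨a.1, Finset.mem_univ _⟩) (fun a => ⟨a.1, Finset.mem_univ _⟩) x
  left_inv w := by by_cases h : w.1 ∈ L <;> simp [h]
  right_inv x := by
    rcases x with ⟨a, ha⟩ | ⟨a, ha⟩
    · rw [Finset.mem_sdiff] at ha
      simp [ha.2]
    · simp [ha]

noncomputable def fwdσ (L : Finset (Fin n)) (s1 : {w : Fin n // w ∈ L} ≃ Fin L.card)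
    (s2 : {w : Fin n // w ∈ Finset.univ \ L} ≃ Fin (Finset.univ \ L).card) :
    {w : Fin n // w ∈ (Finset.univ : Finset (Fin n))} ≃ Fin (Finset.univ : Finset (Fin n)).card :=
  ((splitEquiv L).trans ((s2.sumCongr s1).trans finSumFinEquiv)).trans
    (finCongr (by
      rw [Finset.card_sdiff_of_subset (Finset.subset_univ L)]
      have := Finset.card_le_card (Finset.subset_univ L)
      omega))

lemma fwdσ_val_mem (L : Finset (Fin n)) (s1) (s2) (w : Fin n) (hw : w ∈ L) :
    (fwdσ L s1 s2 ⟨w, Finset.mem_univ w⟩ : ℕ) = (Finset.univ \ L).card + (s1 ⟨w, hw⟩ : ℕ) := by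
  rw [fwdσ, Equiv.trans_apply, Equiv.trans_apply, Equiv.trans_apply]
  rw [finCongr_apply, Fin.val_cast]
  simp [splitEquiv, hw]

lemma fwdσ_val_not_mem (L : Finset (Fin n)) (s1) (s2) (w : Fin n) (hw : w ∉ L) :
    (fwdσ L s1 s2 ⟨w, Finset.mem_univ w⟩ : ℕ) =
      (s2 ⟨w, by simp [Finset.mem_sdiff, hw]⟩ : ℕ) := by
  rw [fwdσ, Equiv.trans_apply, Equiv.trans_apply, Equiv.trans_apply]
  rw [finCongr_apply, Fin.val_cast]
  simp [splitEquiv, hw]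

end Fwd

section Bwd
variable {n : ℕ}

noncomputable def Lset (σe : {w : Fin n // w ∈ (univ : Finset (Fin n))} ≃ Fin (univ : Finset (Fin n)).card)
    (p : ℕ) : Finset (Fin n) :=
  univ.filter fun w => p ≤ (σe ⟨w, mem_univ w⟩ : ℕ)

lemma mem_Lset {σe} {p : ℕ} {w : Fin n} :
    w ∈ Lset σe p ↔ p ≤ (σe ⟨w, mem_univ w⟩ : ℕ) := by
  simp [Lset]

noncomputable def eRfun (σe : {w : Fin n // w ∈ (univ : Finset (Fin n))} ≃ Fin (univ : Finset (Fin n)).card)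
    (p : ℕ) (hp : p ≤ (univ : Finset (Fin n)).card) :
    {w : Fin n // w ∈ univ \ Lset σe p} ≃ Fin p where
  toFun w := ⟨(σe ⟨w.1, mem_univ _⟩ : ℕ), by
    have h := w.2
    rw [mem_sdiff, mem_Lset] at h
    omega⟩
  invFun i := ⟨(σe.symm ⟨i.1, lt_of_lt_of_le i.2 hp⟩).1, by
    rw [mem_sdiff, mem_Lset]
    refine ⟨mem_univ _, ?_⟩
    have : σe ⟨(σe.symm ⟨i.1, lt_of_lt_of_le i.2 hp⟩).1, mem_univ _⟩
        = ⟨i.1, lt_of_lt_of_le i.2 hp⟩ := by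
      rw [Subtype.coe_eta, Equiv.apply_symm_apply]
    rw [this]
    show ¬ p ≤ i.1
    have := i.2; omega⟩
  left_inv w := by
    apply Subtype.ext
    have : (⟨(σe ⟨w.1, mem_univ _⟩ : ℕ), lt_of_lt_of_le (by have h := w.2; rw [mem_sdiff, mem_Lset] at h; omega) hp⟩ : Fin (univ : Finset (Fin n)).card) = σe ⟨w.1, mem_univ _⟩ := by
      apply Fin.ext; rfl
    simp only [this, Equiv.symm_apply_apply]
  right_inv i := by
    apply Fin.ext
    simp only [Subtype.coe_eta, Equiv.apply_symm_apply]

lemma eRfun_val (σe) (p : ℕ) (hp : p ≤ (univ : Finset (Fin n)).card) (w : Fin n)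
    (hw : w ∈ univ \ Lset σe p) :
    ((eRfun σe p hp ⟨w, hw⟩ : Fin p) : ℕ) = (σe ⟨w, mem_univ w⟩ : ℕ) := rfl

lemma card_compl_Lset (σe : {w : Fin n // w ∈ (univ : Finset (Fin n))} ≃ Fin (univ : Finset (Fin n)).card)
    (p : ℕ) (hp : p ≤ (univ : Finset (Fin n)).card) :
    (univ \ Lset σe p).card = p :=
  Finset.card_eq_of_equiv_fin (eRfun σe p hp)

lemma card_Lset (σe : {w : Fin n // w ∈ (univ : Finset (Fin n))} ≃ Fin (univ : Finset (Fin n)).card)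
    (p : ℕ) (hp : p ≤ (univ : Finset (Fin n)).card) :
    (Lset σe p).card = (univ : Finset (Fin n)).card - p := by
  have h1 := card_compl_Lset σe p hp
  have h2 : (univ \ Lset σe p).card = (univ : Finset (Fin n)).card - (Lset σe p).card :=
    Finset.card_sdiff_of_subset (Finset.subset_univ _)
  have h3 := Finset.card_le_card (Finset.subset_univ (Lset σe p))
  omega

noncomputable def sLfun (σe : {w : Fin n // w ∈ (univ : Finset (Fin n))} ≃ Fin (univ : Finset (Fin n)).card)
    (p : ℕ) (hp : p ≤ (univ : Finset (Fin n)).card) :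
    {w : Fin n // w ∈ Lset σe p} ≃ Fin (Lset σe p).card where
  toFun w := ⟨(σe ⟨w.1, mem_univ _⟩ : ℕ) - p, by
    rw [card_Lset σe p hp]
    have h := w.2; rw [mem_Lset] at h
    have h2 := (σe ⟨w.1, mem_univ _⟩).2
    omega⟩
  invFun i := ⟨(σe.symm ⟨i.1 + p, by have h9 := card_Lset σe p hp; have := i.2; omega⟩).1, by
    rw [mem_Lset]
    have : σe ⟨(σe.symm ⟨i.1 + p, by have h9 := card_Lset σe p hp; have := i.2; omega⟩).1, mem_univ _⟩
        = ⟨i.1 + p, by have h9 := card_Lset σe p hp; have := i.2; omega⟩ := by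
      rw [Subtype.coe_eta, Equiv.apply_symm_apply]
    rw [this]
    show p ≤ i.1 + p
    omega⟩
  left_inv w := by
    apply Subtype.ext
    have hw := w.2; rw [mem_Lset] at hw
    have : (⟨(σe ⟨w.1, mem_univ _⟩ : ℕ) - p + p, by
        have h2 := (σe ⟨w.1, mem_univ _⟩).2; omega⟩ : Fin (univ : Finset (Fin n)).card)
        = σe ⟨w.1, mem_univ _⟩ := by
      apply Fin.ext; simp only []
      omega
    simp only [this, Equiv.symm_apply_apply]
  right_inv i := by
    apply Fin.ext
    simp only [Subtype.coe_eta, Equiv.apply_symm_apply]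
    omega

lemma sLfun_val (σe) (p : ℕ) (hp : p ≤ (univ : Finset (Fin n)).card) (w : Fin n)
    (hw : w ∈ Lset σe p) :
    ((sLfun σe p hp ⟨w, hw⟩ : Fin (Lset σe p).card) : ℕ)
      = (σe ⟨w, mem_univ w⟩ : ℕ) - p := rfl

variable {par : Fin n → Option (Fin n)}

lemma Lset_up {σe} (hmono : ∀ a b : {w : Fin n // w ∈ (univ : Finset (Fin n))},
      Reaches par a.1 b.1 → (σe b : ℕ) ≤ (σe a : ℕ)) {p : ℕ} {a b : Fin n}
    (h : Reaches par a b) (hb : b ∈ Lset σe p) : a ∈ Lset σe p := by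
  rw [mem_Lset] at hb ⊢
  exact le_trans hb (hmono ⟨a, mem_univ a⟩ ⟨b, mem_univ b⟩ h)

noncomputable def bcut (par : Fin n → Option (Fin n)) (σe : {w : Fin n // w ∈ (univ : Finset (Fin n))} ≃ Fin (univ : Finset (Fin n)).card) (p : ℕ) : Finset (Fin n) :=
  (Lset σe p).filter fun w => ∀ u, par w = some u → u ∉ Lset σe p

lemma lea_bcut (hwf : WellFounded (fun a b : Fin n => par b = some a)) {σe}
    (hmono : ∀ a b : {w : Fin n // w ∈ (univ : Finset (Fin n))},
      Reaches par a.1 b.1 → (σe b : ℕ) ≤ (σe a : ℕ)) (p : ℕ) :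
    lea par (bcut par σe p) = Lset σe p := by
  ext w
  simp only [lea, mem_filter, mem_univ, true_and]
  constructor
  · rintro ⟨x, hx, hwx⟩
    rw [bcut, mem_filter] at hx
    exact Lset_up hmono hwx hx.1
  · intro hw
    obtain ⟨x, h1, h2, h3⟩ := exists_min hwf (· ∈ Lset σe p) w hw
    exact ⟨x, by rw [bcut, mem_filter]; exact ⟨h2, h3⟩, h1⟩

lemma bcut_adm {σe} (hmono : ∀ a b : {w : Fin n // w ∈ (univ : Finset (Fin n))},
      Reaches par a.1 b.1 → (σe b : ℕ) ≤ (σe a : ℕ)) (p : ℕ) :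
    ∀ a ∈ bcut par σe p, ∀ b ∈ bcut par σe p, a ≠ b → ¬ Reaches par a b := by
  intro a ha b hb hne hr
  rw [bcut, mem_filter] at ha hb
  rcases Relation.ReflTransGen.cases_head hr with h | ⟨c, hc, hcb⟩
  · exact hne h
  · exact ha.2 c hc (Lset_up hmono hcb hb.1)

end Bwd

section Maps
variable {n : ℕ} {par : Fin n → Option (Fin n)}

noncomputable def fwdMap (c : CutData n par) : OrderData n par where
  σ := ⟨fwdσ (lea par c.cut) c.σ₁.1 c.σ₂.1, by
    rintro ⟨a, ha0⟩ ⟨b, hb0⟩ h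
    simp only at h
    by_cases hb : b ∈ lea par c.cut
    · have ha : a ∈ lea par c.cut := lea_up h hb
      rw [fwdσ_val_mem _ _ _ b hb, fwdσ_val_mem _ _ _ a ha]
      have := c.σ₁.2 ⟨a, ha⟩ ⟨b, hb⟩ h
      omega
    · by_cases ha : a ∈ lea par c.cut
      · rw [fwdσ_val_not_mem _ _ _ b hb, fwdσ_val_mem _ _ _ a ha]
        have := (c.σ₂.1 ⟨b, by rw [mem_sdiff]; exact ⟨mem_univ _, hb⟩⟩).2
        omega
      · rw [fwdσ_val_not_mem _ _ _ b hb, fwdσ_val_not_mem _ _ _ a ha]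
        exact c.σ₂.2 ⟨a, by rw [mem_sdiff]; exact ⟨mem_univ _, ha⟩⟩
          ⟨b, by rw [mem_sdiff]; exact ⟨mem_univ _, hb⟩⟩ h⟩
  p := (univ \ lea par c.cut).card
  hp₁ := by
    obtain ⟨r, hr, hrc⟩ := c.nontotal
    have hrL : r ∉ lea par c.cut := by
      intro hmem
      simp only [lea, mem_filter, mem_univ, true_and] at hmem
      obtain ⟨x, hx, hrx⟩ := hmem
      exact hrc ((root_reaches_eq hr hrx) ▸ hx)
    exact Finset.card_pos.mpr ⟨r, by rw [mem_sdiff]; exact ⟨mem_univ _, hrL⟩⟩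
  hp₂ := by
    have h1 : (univ \ lea par c.cut).card
        = (univ : Finset (Fin n)).card - (lea par c.cut).card :=
      Finset.card_sdiff_of_subset (subset_univ _)
    have h2 : 0 < (lea par c.cut).card :=
      Finset.card_pos.mpr ⟨c.nonempty.choose, cut_subset_lea c.nonempty.choose_spec⟩
    have h3 : (univ : Finset (Fin n)).card = n := by simp
    omega

lemma fwdMap_p (c : CutData n par) : (fwdMap c).p = (univ \ lea par c.cut).card := rfl

lemma fwdMap_σ_val_mem (c : CutData n par) (w : Fin n) (hw : w ∈ lea par c.cut) :
    ((fwdMap c).σ.1 ⟨w, mem_univ w⟩ : ℕ)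
      = (univ \ lea par c.cut).card + (c.σ₁.1 ⟨w, hw⟩ : ℕ) :=
  fwdσ_val_mem _ _ _ w hw

lemma fwdMap_σ_val_not_mem (c : CutData n par) (w : Fin n) (hw : w ∉ lea par c.cut) :
    ((fwdMap c).σ.1 ⟨w, mem_univ w⟩ : ℕ)
      = (c.σ₂.1 ⟨w, by rw [mem_sdiff]; exact ⟨mem_univ _, hw⟩⟩ : ℕ) :=
  fwdσ_val_not_mem _ _ _ w hw

lemma p_le_card (htree : ∃! r : Fin n, par r = none) (o : OrderData n par) :
    o.p ≤ (univ : Finset (Fin n)).card := by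
  have h1 := o.hp₂
  have h2 : (univ : Finset (Fin n)).card = n := by simp
  have h3 := htree.choose.pos
  omega

noncomputable def bσ₁ (htree : ∃! r : Fin n, par r = none) (o : OrderData n par) :
    LinOrdOn par (Lset o.σ.1 o.p) :=
  ⟨sLfun o.σ.1 o.p (p_le_card htree o), by
    rintro ⟨a, ha⟩ ⟨b, hb⟩ h
    simp only at h
    rw [sLfun_val o.σ.1 o.p (p_le_card htree o) a ha,
      sLfun_val o.σ.1 o.p (p_le_card htree o) b hb]
    have := o.σ.2 ⟨a, mem_univ a⟩ ⟨b, mem_univ b⟩ h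
    omega⟩

noncomputable def bσ₂ (htree : ∃! r : Fin n, par r = none) (o : OrderData n par) :
    LinOrdOn par (univ \ Lset o.σ.1 o.p) :=
  ⟨(eRfun o.σ.1 o.p (p_le_card htree o)).trans
      (finCongr (card_compl_Lset o.σ.1 o.p (p_le_card htree o)).symm), by
    rintro ⟨a, ha⟩ ⟨b, hb⟩ h
    simp only at h
    show ((finCongr (card_compl_Lset o.σ.1 o.p (p_le_card htree o)).symm
        (eRfun o.σ.1 o.p (p_le_card htree o) ⟨b, hb⟩) : Fin _) : ℕ) ≤
      ((finCongr (card_compl_Lset o.σ.1 o.p (p_le_card htree o)).symm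
        (eRfun o.σ.1 o.p (p_le_card htree o) ⟨a, ha⟩) : Fin _) : ℕ)
    rw [finCongr_apply, finCongr_apply, Fin.coe_cast, Fin.coe_cast,
      eRfun_val o.σ.1 o.p (p_le_card htree o) a ha,
      eRfun_val o.σ.1 o.p (p_le_card htree o) b hb]
    exact o.σ.2 ⟨a, mem_univ a⟩ ⟨b, mem_univ b⟩ h⟩

lemma bσ₁_val (htree : ∃! r : Fin n, par r = none) (o : OrderData n par) (w : Fin n)
    (hw : w ∈ Lset o.σ.1 o.p) :
    ((bσ₁ htree o).1 ⟨w, hw⟩ : ℕ) = (o.σ.1 ⟨w, mem_univ w⟩ : ℕ) - o.p := rfl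

lemma bσ₂_val (htree : ∃! r : Fin n, par r = none) (o : OrderData n par) (w : Fin n)
    (hw : w ∈ univ \ Lset o.σ.1 o.p) :
    ((bσ₂ htree o).1 ⟨w, hw⟩ : ℕ) = (o.σ.1 ⟨w, mem_univ w⟩ : ℕ) := by
  show ((finCongr (card_compl_Lset o.σ.1 o.p (p_le_card htree o)).symm
      (eRfun o.σ.1 o.p (p_le_card htree o) ⟨w, hw⟩) : Fin _) : ℕ) = _
  rw [finCongr_apply, Fin.coe_cast, eRfun_val]

noncomputable def bwdMap (hwf : WellFounded (fun a b : Fin n => par b = some a))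
    (htree : ∃! r : Fin n, par r = none) (o : OrderData n par) : CutData n par where
  cut := bcut par o.σ.1 o.p
  admissible := bcut_adm o.σ.2 o.p
  nonempty := by
    obtain ⟨r, hr, _⟩ := htree
    have hn : 0 < (univ : Finset (Fin n)).card := by
      have : (univ : Finset (Fin n)).card = n := by simp
      have := r.pos; omega
    have hw : (o.σ.1.symm ⟨(univ : Finset (Fin n)).card - 1, by omega⟩).1
        ∈ Lset o.σ.1 o.p := by
      rw [mem_Lset]
      have h5 : o.σ.1 ⟨(o.σ.1.symm ⟨(univ : Finset (Fin n)).card - 1, by omega⟩).1,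
          mem_univ _⟩ = ⟨(univ : Finset (Fin n)).card - 1, by omega⟩ := by
        rw [Subtype.coe_eta, Equiv.apply_symm_apply]
      rw [h5]
      show o.p ≤ (univ : Finset (Fin n)).card - 1
      have := o.hp₂
      have : (univ : Finset (Fin n)).card = n := by simp
      omega
    obtain ⟨x, _, h2, h3⟩ := exists_min hwf (· ∈ Lset o.σ.1 o.p) _ hw
    exact ⟨x, by rw [bcut, mem_filter]; exact ⟨h2, h3⟩⟩
  nontotal := by
    obtain ⟨r, hr, huniq⟩ := htree
    refine ⟨r, hr, fun hrc => ?_⟩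
    rw [bcut, mem_filter, mem_Lset] at hrc
    have hz : 0 < (univ : Finset (Fin n)).card := by
      have : (univ : Finset (Fin n)).card = n := by simp
      have := r.pos; omega
    have hle := o.σ.2 ⟨(o.σ.1.symm ⟨0, hz⟩).1, mem_univ _⟩ ⟨r, mem_univ r⟩
      (reaches_root hwf (fun w hw => huniq w hw) _)
    have hσj : o.σ.1 ⟨(o.σ.1.symm ⟨0, hz⟩).1, mem_univ _⟩ = ⟨0, hz⟩ := by
      rw [Subtype.coe_eta, Equiv.apply_symm_apply]
    rw [hσj] at hle
    have h1 := o.hp₁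
    have h0 : ((⟨0, hz⟩ : Fin (univ : Finset (Fin n)).card) : ℕ) = 0 := rfl
    omega
  σ₁ := (lea_bcut hwf o.σ.2 o.p).symm ▸ bσ₁ htree o
  σ₂ := (congrArg (fun s => univ \ s) (lea_bcut hwf o.σ.2 o.p).symm) ▸ bσ₂ htree o

lemma bwdMap_cut (hwf : WellFounded (fun a b : Fin n => par b = some a))
    (htree : ∃! r : Fin n, par r = none) (o : OrderData n par) :
    (bwdMap hwf htree o).cut = bcut par o.σ.1 o.p := rfl

lemma bwdMap_σ₁_val (hwf : WellFounded (fun a b : Fin n => par b = some a))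
    (htree : ∃! r : Fin n, par r = none) (o : OrderData n par) (w : Fin n)
    (hw : w ∈ lea par (bwdMap hwf htree o).cut) :
    ((bwdMap hwf htree o).σ₁.1 ⟨w, hw⟩ : ℕ) = (o.σ.1 ⟨w, mem_univ w⟩ : ℕ) - o.p := by
  have h := linOrdOn_cast_val (par := par) (lea_bcut hwf o.σ.2 o.p).symm
    (bσ₁ htree o) w hw
  exact h.trans (bσ₁_val htree o w _)

lemma bwdMap_σ₂_val (hwf : WellFounded (fun a b : Fin n => par b = some a))
    (htree : ∃! r : Fin n, par r = none) (o : OrderData n par) (w : Fin n)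
    (hw : w ∈ univ \ lea par (bwdMap hwf htree o).cut) :
    ((bwdMap hwf htree o).σ₂.1 ⟨w, hw⟩ : ℕ) = (o.σ.1 ⟨w, mem_univ w⟩ : ℕ) := by
  have h := linOrdOn_cast_val (par := par)
    (congrArg (fun s => univ \ s) (lea_bcut hwf o.σ.2 o.p).symm)
    (bσ₂ htree o) w hw
  exact h.trans (bσ₂_val htree o w _)

end Maps

section Round
variable {n : ℕ} {par : Fin n → Option (Fin n)}

lemma OrderData.ext' {o o' : OrderData n par} (hp : o.p = o'.p)
    (h : ∀ w : Fin n, (o.σ.1 ⟨w, mem_univ w⟩ : ℕ) = (o'.σ.1 ⟨w, mem_univ w⟩ : ℕ)) :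
    o = o' := by
  obtain ⟨⟨σ1, m1⟩, p1, a1, b1⟩ := o
  obtain ⟨⟨σ2, m2⟩, p2, a2, b2⟩ := o'
  simp only at hp h
  subst hp
  congr 1
  apply Subtype.ext
  apply Equiv.ext
  intro w
  apply Fin.ext
  exact h w.1

lemma CutData.ext' {c d : CutData n par} (hc : c.cut = d.cut)
    (h1 : ∀ w (hw : w ∈ lea par c.cut) (hw' : w ∈ lea par d.cut),
      (c.σ₁.1 ⟨w, hw⟩ : ℕ) = (d.σ₁.1 ⟨w, hw'⟩ : ℕ))
    (h2 : ∀ w (hw : w ∈ univ \ lea par c.cut) (hw' : w ∈ univ \ lea par d.cut),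
      (c.σ₂.1 ⟨w, hw⟩ : ℕ) = (d.σ₂.1 ⟨w, hw'⟩ : ℕ)) : c = d := by
  obtain ⟨cut1, adm1, ne1, nt1, s11, s12⟩ := c
  obtain ⟨cut2, adm2, ne2, nt2, s21, s22⟩ := d
  simp only at hc h1 h2
  subst hc
  congr 1
  · apply Subtype.ext; apply Equiv.ext; intro w; apply Fin.ext; exact h1 w.1 w.2 w.2
  · apply Subtype.ext; apply Equiv.ext; intro w; apply Fin.ext; exact h2 w.1 w.2 w.2

lemma Lset_fwdMap (c : CutData n par) :
    Lset (fwdMap c).σ.1 (fwdMap c).p = lea par c.cut := by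
  ext w
  rw [mem_Lset]
  by_cases hw : w ∈ lea par c.cut
  · simp only [hw, iff_true]
    rw [fwdMap_σ_val_mem c w hw]
    exact Nat.le_add_right _ _
  · simp only [hw, iff_false, not_le]
    rw [fwdMap_σ_val_not_mem c w hw]
    exact (c.σ₂.1 ⟨w, by rw [mem_sdiff]; exact ⟨mem_univ _, hw⟩⟩).2

lemma left_round (hwf : WellFounded (fun a b : Fin n => par b = some a))
    (htree : ∃! r : Fin n, par r = none) (c : CutData n par) :
    bwdMap hwf htree (fwdMap c) = c := by
  have hbc : (bwdMap hwf htree (fwdMap c)).cut = c.cut := by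
    rw [bwdMap_cut]
    ext w
    rw [bcut, mem_filter]
    rw [Lset_fwdMap c]
    exact (cut_char hwf c.admissible w).symm
  apply CutData.ext' hbc
  · intro w hw hw'
    rw [bwdMap_σ₁_val hwf htree (fwdMap c) w hw]
    rw [fwdMap_σ_val_mem c w hw', fwdMap_p]
    omega
  · intro w hw hw'
    rw [bwdMap_σ₂_val hwf htree (fwdMap c) w hw]
    rw [fwdMap_σ_val_not_mem c w (by rw [mem_sdiff] at hw'; exact hw'.2)]

lemma right_round (hwf : WellFounded (fun a b : Fin n => par b = some a))
    (htree : ∃! r : Fin n, par r = none) (o : OrderData n par) :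
    fwdMap (bwdMap hwf htree o) = o := by
  have hlea : lea par (bwdMap hwf htree o).cut = Lset o.σ.1 o.p := by
    rw [bwdMap_cut]; exact lea_bcut hwf o.σ.2 o.p
  have hpcard : (univ \ lea par (bwdMap hwf htree o).cut).card = o.p := by
    rw [hlea]; exact card_compl_Lset o.σ.1 o.p (p_le_card htree o)
  apply OrderData.ext'
  · rw [fwdMap_p]; exact hpcard
  · intro w
    by_cases hw : w ∈ lea par (bwdMap hwf htree o).cut
    · rw [fwdMap_σ_val_mem _ w hw, bwdMap_σ₁_val hwf htree o w hw, hpcard]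
      have hwL : w ∈ Lset o.σ.1 o.p := by rw [← hlea]; exact hw
      rw [mem_Lset] at hwL
      omega
    · rw [fwdMap_σ_val_not_mem _ w hw,
        bwdMap_σ₂_val hwf htree o w (by rw [mem_sdiff]; exact ⟨mem_univ _, hw⟩)]

end Round

/-- For any rooted tree `T` with `n` vertices, the pairs consisting of a
nontrivial admissible cut `v` of `T` together with linear orders on `Lea_v(T)`
and `Roo_v(T)` are in bijection with the pairs consisting of a linear order on
`T` together with an integer `p ∈ {1,…,n−1}`. -/
theorem cutData_equiv_orderData (n : ℕ) (par : Fin n → Option (Fin n))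
    (hwf : WellFounded (fun a b : Fin n => par b = some a))
    (htree : ∃! r : Fin n, par r = none) :
    Nonempty (CutData n par ≃ OrderData n par) := by
  exact ⟨⟨fwdMap, bwdMap hwf htree, left_round hwf htree, right_round hwf htree⟩⟩
end
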